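/- arXiv:2102.07974 — 10 statements merged into one kernel-verified Lean document; each statement's English description precedes it below -/
import Mathlib

section
/- There exists δ ∈ (0, 1/2) such that the interval I = [δ, 1−δ] is invariant under f_{a,b} (i.e., f_{a,b}(I) ⊆ I) and globally attracting on (0,1): for every x ∈ (0,1) there exists n ∈ ℕ with f_{a,b}ⁿ(x) ∈ I. -/
/-! In the coordinate `y = Ψ x` the map reads `y ↦ y + a (x - b)`: every step moves `y` towards
`Ψ b` by less than `a`. Hence `|Ψ x| ≤ M` is preserved once `M ≥ a + |Ψ b|`, and for `δ = Ψ⁻¹ M`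
this region is exactly `[δ, 1 - δ]`. Outside it `x < δ < b` or `x > 1 - δ > b`, so the step has
size bounded below, and `|Ψ x|` decreases by a fixed amount until the orbit enters the region. -/

open Set

theorem Set.MapsTo.exists_iterate_le_of_le_sub {α : Type*} {g : α → α} {s : Set α}
    (hg : MapsTo g s s) {φ : α → ℝ} {M ε : ℝ} (hε : 0 < ε)
    (hφ : ∀ x ∈ s, M < φ x → φ (g x) ≤ φ x - ε) {x : α} (hx : x ∈ s) :
    ∃ n, φ (g^[n] x) ≤ M := by
  by_contra! hM
  have hdecay : ∀ n : ℕ, φ (g^[n] x) ≤ φ x - n * ε := by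
    intro n
    induction n with
    | zero => simp
    | succ n ih =>
      rw [Function.iterate_succ_apply']
      have := hφ _ (hg.iterate n hx) (hM n)
      push_cast
      linarith
  obtain ⟨n, hn⟩ := exists_nat_gt ((φ x - M) / ε)
  rw [div_lt_iff₀ hε] at hn
  linarith [hdecay n, hM n]

section FoReL

variable {Ψ : ℝ → ℝ} {a b : ℝ}

theorem mem_Icc_iff_abs_le (hΨanti : StrictAntiOn Ψ (Ioo 0 1))
    (hΨsym : ∀ x ∈ Ioo (0:ℝ) 1, Ψ (1 - x) = -Ψ x) {δ x : ℝ} (hδ : δ ∈ Ioo 0 1)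
    (hx : x ∈ Ioo 0 1) : x ∈ Icc δ (1 - δ) ↔ |Ψ x| ≤ Ψ δ := by
  have h1δ : 1 - δ ∈ Ioo (0:ℝ) 1 := ⟨by linarith [hδ.2], by linarith [hδ.1]⟩
  rw [mem_Icc, abs_le, ← hΨsym δ hδ, hΨanti.le_iff_ge h1δ hx, hΨanti.le_iff_ge hx hδ, and_comm]

theorem abs_mul_sub_lt (ha : 0 < a) (hb : b ∈ Ioo 0 1) {x : ℝ} (hx : x ∈ Ioo 0 1) :
    |a * (x - b)| < a := by
  rw [abs_mul, abs_of_pos ha]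
  exact mul_lt_of_lt_one_right ha (abs_sub_lt_of_nonneg_of_lt hx.1.le hx.2 hb.1.le hb.2)

theorem abs_add_step_le (hΨanti : StrictAntiOn Ψ (Ioo 0 1)) (ha : 0 < a)
    (hb : b ∈ Ioo 0 1) {x : ℝ} (hx : x ∈ Ioo 0 1) (hxM : |Ψ x| ≤ a + |Ψ b|) :
    |Ψ x + a * (x - b)| ≤ a + |Ψ b| := by
  obtain ⟨hΨx, hΨx'⟩ := abs_le.mp hxM
  have hΨb := le_abs_self (Ψ b)
  have hΨb' := neg_abs_le (Ψ b)
  obtain ⟨hstep, hstep'⟩ := abs_lt.mp (abs_mul_sub_lt ha hb hx)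
  rw [abs_le]
  rcases le_total x b with hxb | hbx
  · have := hΨanti.antitoneOn hx hb hxb
    have : a * (x - b) ≤ 0 := mul_nonpos_of_nonneg_of_nonpos ha.le (by linarith)
    constructor <;> linarith
  · have := hΨanti.antitoneOn hb hx hbx
    have : 0 ≤ a * (x - b) := mul_nonneg ha.le (by linarith)
    constructor <;> linarith

theorem abs_add_step_le_sub (hΨanti : StrictAntiOn Ψ (Ioo 0 1))
    (hΨsym : ∀ x ∈ Ioo (0:ℝ) 1, Ψ (1 - x) = -Ψ x) (ha : 0 < a) (hb : b ∈ Ioo 0 1)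
    {δ x : ℝ} (hδ : δ ∈ Ioo 0 1) (hδb : δ < b) (hbδ : b < 1 - δ) (haδ : a ≤ Ψ δ)
    (hx : x ∈ Ioo 0 1) (hxδ : Ψ δ < |Ψ x|) :
    |Ψ x + a * (x - b)| ≤ |Ψ x| - a * min (b - δ) (1 - δ - b) := by
  have h1δ : 1 - δ ∈ Ioo (0:ℝ) 1 := ⟨by linarith [hδ.2], by linarith [hδ.1]⟩
  obtain ⟨hstep, hstep'⟩ := abs_lt.mp (abs_mul_sub_lt ha hb hx)
  have hεa : a * min (b - δ) (1 - δ - b) < a :=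
    lt_of_le_of_lt (mul_le_mul_of_nonneg_left (min_le_left _ _) ha.le)
      (mul_lt_of_lt_one_right ha (by linarith [hδ.1, hb.2]))
  rcases lt_abs.mp hxδ with hpos | hneg
  · have hxδ' : x < δ := (hΨanti.lt_iff_gt hδ hx).mp hpos
    have : a * (x - b) ≤ -(a * min (b - δ) (1 - δ - b)) := by
      nlinarith [min_le_left (b - δ) (1 - δ - b)]
    rw [abs_of_pos (a := Ψ x) (by linarith), abs_le]
    constructor <;> linarith
  · have hxδ' : 1 - δ < x := (hΨanti.lt_iff_gt hx h1δ).mp (by linarith [hΨsym δ hδ])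
    have : a * min (b - δ) (1 - δ - b) ≤ a * (x - b) := by
      nlinarith [min_le_right (b - δ) (1 - δ - b)]
    rw [abs_of_neg (a := Ψ x) (by linarith), abs_le]
    constructor <;> linarith

end FoReL

theorem stmt4_general
    (Ψ Ψinv : ℝ → ℝ)
    (hΨanti : StrictAntiOn Ψ (Set.Ioo 0 1))
    (hΨsym : ∀ x ∈ Set.Ioo (0:ℝ) 1, Ψ (1 - x) = -Ψ x)
    (hinv2 : ∀ y : ℝ, Ψinv y ∈ Set.Ioo (0:ℝ) 1 ∧ Ψ (Ψinv y) = y)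
    (a b : ℝ) (ha : 0 < a) (hb : b ∈ Set.Ioo (0:ℝ) 1)
    (f : ℝ → ℝ)
    (hf : ∀ x ∈ Set.Ioo (0:ℝ) 1, f x = Ψinv (Ψ x + a * (x - b))) :
    ∃ δ ∈ Set.Ioo (0:ℝ) (1/2),
      Set.MapsTo f (Set.Icc δ (1 - δ)) (Set.Icc δ (1 - δ)) ∧
      ∀ x ∈ Set.Ioo (0:ℝ) 1, ∃ n : ℕ, f^[n] x ∈ Set.Icc δ (1 - δ) := by
  obtain ⟨hδ, hΨδ⟩ := hinv2 (a + |Ψ b|)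
  set δ := Ψinv (a + |Ψ b|)
  have hΨb := le_abs_self (Ψ b)
  have hΨb' := neg_abs_le (Ψ b)
  have hδb : δ < b := (hΨanti.lt_iff_gt hb hδ).mp (by linarith)
  have hbδ : b < 1 - δ := by
    have := hΨsym δ hδ
    exact (hΨanti.lt_iff_gt ⟨by linarith [hδ.2], by linarith [hδ.1]⟩ hb).mp (by linarith)
  have hmem x (hx : x ∈ Ioo (0:ℝ) 1) := mem_Icc_iff_abs_le hΨanti hΨsym hδ hx
  have hstep x (hx : x ∈ Ioo (0:ℝ) 1) : f x ∈ Ioo 0 1 ∧ Ψ (f x) = Ψ x + a * (x - b) := by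
    rw [hf x hx]; exact hinv2 _
  have hf01 : MapsTo f (Ioo 0 1) (Ioo 0 1) := fun x hx ↦ (hstep x hx).1
  have hIcc01 : Icc δ (1 - δ) ⊆ Ioo 0 1 := fun x hx ↦
    ⟨by linarith [hδ.1, hx.1], by linarith [hδ.1, hx.2]⟩
  refine ⟨δ, ⟨hδ.1, by linarith⟩, fun x hx ↦ ?_, fun x hx ↦ ?_⟩
  · have hx01 := hIcc01 hx
    rw [hmem _ (hstep x hx01).1, (hstep x hx01).2, hΨδ]
    exact abs_add_step_le hΨanti ha hb hx01 (hΨδ ▸ (hmem x hx01).mp hx)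
  · have hε : 0 < a * min (b - δ) (1 - δ - b) := mul_pos ha (lt_min (by linarith) (by linarith))
    obtain ⟨n, hn⟩ := hf01.exists_iterate_le_of_le_sub (φ := fun y ↦ |Ψ y|) hε
      (fun y hy hyM ↦ by
        rw [(hstep y hy).2]
        exact abs_add_step_le_sub hΨanti hΨsym ha hb hδ hδb hbδ (by linarith) hy hyM) hx
    exact ⟨n, (hmem _ (hf01.iterate n hx)).mpr hn⟩

theorem stmt4
    (Ψ Ψinv : ℝ → ℝ)
    (hΨcont : ContinuousOn Ψ (Set.Ioo 0 1))
    (hΨanti : StrictAntiOn Ψ (Set.Ioo 0 1))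
    (hΨbij : Set.BijOn Ψ (Set.Ioo 0 1) Set.univ)
    (hΨsym : ∀ x ∈ Set.Ioo (0:ℝ) 1, Ψ (1 - x) = -Ψ x)
    (hinv1 : ∀ x ∈ Set.Ioo (0:ℝ) 1, Ψinv (Ψ x) = x)
    (hinv2 : ∀ y : ℝ, Ψinv y ∈ Set.Ioo (0:ℝ) 1 ∧ Ψ (Ψinv y) = y)
    (a b : ℝ) (ha : 0 < a) (hb : b ∈ Set.Ioo (0:ℝ) 1)
    (f : ℝ → ℝ) (hf0 : f 0 = 0) (hf1 : f 1 = 1)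
    (hf : ∀ x ∈ Set.Ioo (0:ℝ) 1, f x = Ψinv (Ψ x + a * (x - b))) :
    ∃ δ ∈ Set.Ioo (0:ℝ) (1/2),
      Set.MapsTo f (Set.Icc δ (1 - δ)) (Set.Icc δ (1 - δ)) ∧
      ∀ x ∈ Set.Ioo (0:ℝ) 1, ∃ n : ℕ, f^[n] x ∈ Set.Icc δ (1 - δ) :=
  stmt4_general Ψ Ψinv hΨanti hΨsym hinv2 a b ha hb f hf
end

section
/- (Nash equilibrium is Cesàro attracting.) For every a > 0, b ∈ (0,1) and every x₀ ∈ (0,1), the time averages converge to the Nash equilibrium: lim_{n→∞} (1/n) ∑_{k=0}^{n−1} f_{a,b}ᵏ(x₀) = b. -/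
/-! In the dual variable `y = Ψ x` the FoReL map is the additive update `y ↦ y + a (x - b)`, so the
sum of the first `n` iterates telescopes to `n b + (Ψ xₙ - Ψ x₀) / a`. Since `Ψ` is decreasing, the
update pushes `Ψ xₙ` down whenever it is above `Ψ b + a (1 - b)` and up whenever it is below
`Ψ b - a b`, so `Ψ xₙ` stays bounded and the Cesàro averages converge to `b`. -/

open Filter Set Topology

section Increments

variable {x y : ℕ → ℝ} {a b : ℝ}

theorem sum_range_eq_of_increment (hstep : ∀ k, y (k + 1) = y k + a * (x k - b)) (ha : a ≠ 0)
    (n : ℕ) : ∑ k ∈ Finset.range n, x k = n * b + (y n - y 0) / a := by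
  induction n with
  | zero => simp
  | succ n ih =>
    rw [Finset.sum_range_succ, ih, hstep n]
    push_cast
    field_simp
    ring

theorem mem_Icc_of_le_max_of_min_le {m M : ℝ} (hup : ∀ n, y (n + 1) ≤ max (y n) M)
    (hlo : ∀ n, min (y n) m ≤ y (n + 1)) : ∀ n, y n ∈ Icc (min (y 0) m) (max (y 0) M) := by
  intro n
  induction n with
  | zero => exact ⟨min_le_left _ _, le_max_left _ _⟩
  | succ n ih =>
    exact ⟨(le_min ih.1 (min_le_right _ _)).trans (hlo n),
      (hup n).trans (max_le ih.2 (le_max_right _ _))⟩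

theorem tendsto_div_natCast_of_abs_le {u : ℕ → ℝ} {C : ℝ} (hu : ∀ n, |u n| ≤ C) :
    Tendsto (fun n : ℕ => u n / n) atTop (𝓝 0) := by
  refine squeeze_zero_norm (fun n => ?_) (tendsto_const_div_atTop_nhds_zero_nat C)
  rw [Real.norm_eq_abs, abs_div, Nat.abs_cast]
  exact div_le_div_of_nonneg_right (hu n) n.cast_nonneg

theorem tendsto_average_of_increment {lo hi : ℝ} (hstep : ∀ k, y (k + 1) = y k + a * (x k - b))
    (ha : a ≠ 0) (hy : ∀ n, y n ∈ Icc lo hi) :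
    Tendsto (fun n : ℕ => (∑ k ∈ Finset.range n, x k) / n) atTop (𝓝 b) := by
  have hdrift : ∀ n, |y n - y 0| ≤ hi - lo := fun n =>
    abs_sub_le_iff.2 ⟨by linarith [(hy n).2, (hy 0).1], by linarith [(hy 0).2, (hy n).1]⟩
  have hlim := tendsto_const_nhds (x := b).add
    ((tendsto_div_natCast_of_abs_le hdrift).div_const a)
  rw [zero_div, add_zero] at hlim
  refine hlim.congr' ((eventually_ne_atTop 0).mono fun n hn => ?_)
  dsimp only
  rw [sum_range_eq_of_increment hstep ha n]
  field_simp

end Increments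

section FoReL

variable {Ψ : ℝ → ℝ} {a b x : ℝ}

theorem forel_update_le_max (hΨ : AntitoneOn Ψ (Ioo 0 1)) (ha : 0 ≤ a) (hb : b ∈ Ioo 0 1)
    (hx : x ∈ Ioo 0 1) : Ψ x + a * (x - b) ≤ max (Ψ x) (Ψ b + a * (1 - b)) := by
  rcases lt_or_ge x b with hxb | hbx
  · exact le_max_of_le_left (by nlinarith)
  · exact le_max_of_le_right (add_le_add (hΨ hb hx hbx) (by nlinarith [hx.2]))

theorem min_le_forel_update (hΨ : AntitoneOn Ψ (Ioo 0 1)) (ha : 0 ≤ a) (hb : b ∈ Ioo 0 1)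
    (hx : x ∈ Ioo 0 1) : min (Ψ x) (Ψ b - a * b) ≤ Ψ x + a * (x - b) := by
  rcases le_or_gt x b with hxb | hbx
  · exact min_le_of_right_le (by linarith [hΨ hx hb hxb, mul_nonneg ha hx.1.le])
  · exact min_le_of_left_le (by nlinarith)

end FoReL

theorem stmt5_general
    (Ψ Ψinv : ℝ → ℝ)
    (hΨanti : StrictAntiOn Ψ (Set.Ioo 0 1))
    (hinv2 : ∀ y : ℝ, Ψinv y ∈ Set.Ioo (0:ℝ) 1 ∧ Ψ (Ψinv y) = y)
    (a b : ℝ) (ha : 0 < a) (hb : b ∈ Set.Ioo (0:ℝ) 1)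
    (f : ℝ → ℝ)
    (hf : ∀ x ∈ Set.Ioo (0:ℝ) 1, f x = Ψinv (Ψ x + a * (x - b))) :
    ∀ x₀ ∈ Set.Ioo (0:ℝ) 1,
      Filter.Tendsto (fun n : ℕ => (∑ k ∈ Finset.range n, f^[k] x₀) / (n : ℝ))
        Filter.atTop (nhds b) := by
  intro x₀ hx₀
  have hmaps : MapsTo f (Ioo 0 1) (Ioo 0 1) := fun x hx => hf x hx ▸ (hinv2 _).1
  have horbit : ∀ k, f^[k] x₀ ∈ Ioo 0 1 := fun k => hmaps.iterate k hx₀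
  have hstep : ∀ k, Ψ (f^[k + 1] x₀) = Ψ (f^[k] x₀) + a * (f^[k] x₀ - b) := fun k => by
    rw [Function.iterate_succ_apply', hf _ (horbit k), (hinv2 _).2]
  have hΨ := hΨanti.antitoneOn
  refine tendsto_average_of_increment (y := fun k => Ψ (f^[k] x₀)) hstep ha.ne'
    (mem_Icc_of_le_max_of_min_le (M := Ψ b + a * (1 - b)) (m := Ψ b - a * b) (fun n => ?_)
      (fun n => ?_))
  · rw [hstep]
    exact forel_update_le_max hΨ ha.le hb (horbit n)
  · rw [hstep]
    exact min_le_forel_update hΨ ha.le hb (horbit n)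

theorem stmt5
    (Ψ Ψinv : ℝ → ℝ)
    (hΨcont : ContinuousOn Ψ (Set.Ioo 0 1))
    (hΨanti : StrictAntiOn Ψ (Set.Ioo 0 1))
    (hΨbij : Set.BijOn Ψ (Set.Ioo 0 1) Set.univ)
    (hΨsym : ∀ x ∈ Set.Ioo (0:ℝ) 1, Ψ (1 - x) = -Ψ x)
    (hinv1 : ∀ x ∈ Set.Ioo (0:ℝ) 1, Ψinv (Ψ x) = x)
    (hinv2 : ∀ y : ℝ, Ψinv y ∈ Set.Ioo (0:ℝ) 1 ∧ Ψ (Ψinv y) = y)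
    (a b : ℝ) (ha : 0 < a) (hb : b ∈ Set.Ioo (0:ℝ) 1)
    (f : ℝ → ℝ) (hf0 : f 0 = 0) (hf1 : f 1 = 1)
    (hf : ∀ x ∈ Set.Ioo (0:ℝ) 1, f x = Ψinv (Ψ x + a * (x - b))) :
    ∀ x₀ ∈ Set.Ioo (0:ℝ) 1,
      Filter.Tendsto (fun n : ℕ => (∑ k ∈ Finset.range n, f^[k] x₀) / (n : ℝ))
        Filter.atTop (nhds b) :=
  stmt5_general Ψ Ψinv hΨanti hinv2 a b ha hb f hf
end

section
/- The center of mass of any periodic orbit of f_{a,b} contained in (0,1) equals b: if x₀ ∈ (0,1) and n ≥ 1 satisfy f_{a,b}ⁿ(x₀) = x₀, then (1/n) ∑_{k=0}^{n−1} f_{a,b}ᵏ(x₀) = b. -/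
/-! Along an orbit in `(0,1)` the map satisfies `Ψ (f x) = Ψ x + a (x - b)`, so `Ψ (fⁿ x₀)` is
`Ψ x₀` plus `a` times the sum of `fᵏ x₀ - b` over `k < n`. On a periodic orbit the left side returns
to `Ψ x₀`, hence that sum vanishes and the orbit average is `b`. -/

open Finset Function Set

section OrbitSum

variable {α : Type*} {f : α → α} {s : Set α}

theorem map_iterate_eq_add_sum {M : Type*} [AddCommMonoid M] {g h : α → M} (hs : MapsTo f s s) (hg : ∀ x ∈ s, g (f x) = g x + h x)
    {x : α} (hx : x ∈ s) (m : ℕ) :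
    g (f^[m] x) = g x + ∑ k ∈ range m, h (f^[k] x) := by
  induction m with
  | zero => simp
  | succ m ih =>
    rw [iterate_succ_apply', hg _ (hs.iterate m hx), ih, sum_range_succ, add_assoc]

theorem sum_orbit_eq_zero_of_isPeriodicPt {M : Type*} [AddCommGroup M] {g h : α → M}
    (hs : MapsTo f s s) (hg : ∀ x ∈ s, g (f x) = g x + h x) {x : α} (hx : x ∈ s) {n : ℕ}
    (hper : IsPeriodicPt f n x) :
    ∑ k ∈ range n, h (f^[k] x) = 0 := by
  have := map_iterate_eq_add_sum hs hg hx n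
  rwa [hper.eq, left_eq_add] at this

end OrbitSum

theorem sum_div_card_eq_of_sum_sub_eq_zero {ι K : Type*} [Field K] [CharZero K] {s : Finset ι}
    (hs : s.Nonempty) {y : ι → K} {c : K} (hsum : ∑ i ∈ s, (y i - c) = 0) :
    (∑ i ∈ s, y i) / #s = c := by
  rw [sum_sub_distrib, sum_const, nsmul_eq_mul, sub_eq_zero] at hsum
  rw [hsum, mul_div_cancel_left₀ _ (Nat.cast_ne_zero.2 hs.card_ne_zero)]

theorem stmt6_general
    (Ψ Ψinv : ℝ → ℝ)
    (hinv2 : ∀ y : ℝ, Ψinv y ∈ Set.Ioo (0:ℝ) 1 ∧ Ψ (Ψinv y) = y)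
    (a b : ℝ) (ha : 0 < a)
    (f : ℝ → ℝ)
    (hf : ∀ x ∈ Set.Ioo (0:ℝ) 1, f x = Ψinv (Ψ x + a * (x - b))) :
    ∀ x₀ ∈ Set.Ioo (0:ℝ) 1, ∀ n : ℕ, 1 ≤ n → f^[n] x₀ = x₀ →
      (∑ k ∈ Finset.range n, f^[k] x₀) / (n : ℝ) = b := by
  intro x₀ hx₀ n hn hper
  have hmaps : MapsTo f (Ioo 0 1) (Ioo 0 1) := fun x hx => hf x hx ▸ (hinv2 _).1
  have hstep : ∀ x ∈ Ioo (0:ℝ) 1, Ψ (f x) = Ψ x + a * (x - b) := fun x hx => by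
    rw [hf x hx, (hinv2 _).2]
  have hsum := sum_orbit_eq_zero_of_isPeriodicPt hmaps hstep hx₀ hper
  rw [← mul_sum, mul_eq_zero, or_iff_right ha.ne'] at hsum
  simpa using sum_div_card_eq_of_sum_sub_eq_zero (nonempty_range_iff.2 (by omega)) hsum

theorem stmt6
    (Ψ Ψinv : ℝ → ℝ)
    (hΨcont : ContinuousOn Ψ (Set.Ioo 0 1))
    (hΨanti : StrictAntiOn Ψ (Set.Ioo 0 1))
    (hΨbij : Set.BijOn Ψ (Set.Ioo 0 1) Set.univ)
    (hΨsym : ∀ x ∈ Set.Ioo (0:ℝ) 1, Ψ (1 - x) = -Ψ x)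
    (hinv1 : ∀ x ∈ Set.Ioo (0:ℝ) 1, Ψinv (Ψ x) = x)
    (hinv2 : ∀ y : ℝ, Ψinv y ∈ Set.Ioo (0:ℝ) 1 ∧ Ψ (Ψinv y) = y)
    (a b : ℝ) (ha : 0 < a) (hb : b ∈ Set.Ioo (0:ℝ) 1)
    (f : ℝ → ℝ) (hf0 : f 0 = 0) (hf1 : f 1 = 1)
    (hf : ∀ x ∈ Set.Ioo (0:ℝ) 1, f x = Ψinv (Ψ x + a * (x - b))) :
    ∀ x₀ ∈ Set.Ioo (0:ℝ) 1, ∀ n : ℕ, 1 ≤ n → f^[n] x₀ = x₀ →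
      (∑ k ∈ Finset.range n, f^[k] x₀) / (n : ℝ) = b :=
  stmt6_general Ψ Ψinv hinv2 a b ha f hf
end

section
/- For every Borel probability measure μ on [0,1] that is invariant under f_{a,b} (i.e., μ(f_{a,b}⁻¹(A)) = μ(A) for every Borel set A ⊆ [0,1]) and satisfies μ({0,1}) = 0, one has ∫_{[0,1]} x dμ(x) = b. -/
/-!
On `(0, 1)` the defining relation of the FoReL map reads `Ψ (f x) - Ψ x = a * (x - b)`, so
`x ↦ a * (x - b)` is a coboundary for the dynamics `f`. The integral of an integrable coboundary
against an invariant probability measure vanishes, even though `Ψ` itself need not be integrable: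
truncating `Ψ` at height `N` gives bounded functions whose coboundaries integrate to zero and are
dominated by `|a * (x - b)|`. Hence `a * (∫ x dμ - b) = 0`.
-/

open MeasureTheory Set Filter Topology

lemma lipschitzWith_truncate (N : ℝ) : LipschitzWith 1 fun y : ℝ => max (min y N) (-N) :=
  (LipschitzWith.id.min_const N).max_const (-N)

lemma abs_truncate_le (N y : ℝ) : |max (min y N) (-N)| ≤ |N| :=
  abs_le.mpr ⟨(neg_le_neg (le_abs_self N)).trans (le_max_right _ _),
    max_le ((min_le_right _ _).trans (le_abs_self N)) (neg_le_abs N)⟩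

lemma eventually_truncate_eq (y : ℝ) : ∀ᶠ N : ℕ in atTop, max (min y N) (-N) = y := by
  obtain ⟨N₀, hN₀⟩ := exists_nat_ge |y|
  filter_upwards [eventually_ge_atTop N₀] with N hN
  have hy : |y| ≤ N := hN₀.trans (by exact_mod_cast hN)
  rw [abs_le] at hy
  rw [min_eq_left hy.2, max_eq_left hy.1]

theorem integral_comp_sub_eq_zero_of_map_eq {α : Type*} [MeasurableSpace α] {ν : Measure α}
    [IsFiniteMeasure ν] {f : α → α} (hf : AEMeasurable f ν) (hmap : ν.map f = ν) {φ : α → ℝ}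
    (hφ : AEMeasurable φ ν) (hint : Integrable (fun x => φ (f x) - φ x) ν) :
    ∫ x, (φ (f x) - φ x) ∂ν = 0 := by
  set T : ℕ → ℝ → ℝ := fun N y => max (min y N) (-N)
  have hφf : AEMeasurable (fun x => φ (f x)) ν := by
    rw [← hmap] at hφ
    exact hφ.comp_aemeasurable hf
  have hT_int : ∀ N (g : α → ℝ), AEMeasurable g ν → Integrable (fun x => T N (g x)) ν :=
    fun N g hg => .of_bound
      ((lipschitzWith_truncate N).continuous.measurable.comp_aemeasurable hg).aestronglyMeasurable
      _ (ae_of_all _ fun x => abs_truncate_le N (g x))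
  have hT_zero : ∀ N, ∫ x, (T N (φ (f x)) - T N (φ x)) ∂ν = 0 := by
    intro N
    have hT_meas : AEStronglyMeasurable (fun y => T N (φ y)) (ν.map f) := by
      rw [hmap]
      exact (hT_int N φ hφ).aestronglyMeasurable
    rw [integral_sub (hT_int N _ hφf) (hT_int N φ hφ), ← integral_map hf hT_meas, hmap, sub_self]
  have hT_lim : Tendsto (fun N => ∫ x, (T N (φ (f x)) - T N (φ x)) ∂ν) atTop
      (𝓝 (∫ x, (φ (f x) - φ x) ∂ν)) := by
    refine tendsto_integral_of_dominated_convergence (fun x => ‖φ (f x) - φ x‖)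
      (fun N => ((hT_int N _ hφf).sub (hT_int N φ hφ)).aestronglyMeasurable) hint.norm
      (fun N => ae_of_all _ fun x => ?_) (ae_of_all _ fun x => ?_)
    · simpa [Real.dist_eq] using (lipschitzWith_truncate N).dist_le_mul (φ (f x)) (φ x)
    · refine tendsto_nhds_of_eventually_eq ?_
      filter_upwards [eventually_truncate_eq (φ (f x)), eventually_truncate_eq (φ x)] with N h₁ h₂
      simp only [T, h₁, h₂]
  simp only [hT_zero] at hT_lim
  exact tendsto_nhds_unique hT_lim tendsto_const_nhds

theorem map_restrict_eq_of_preimage_inter {α : Type*} [MeasurableSpace α] {μ : Measure α}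
    {s t : Set α} {f : α → α} (hs : MeasurableSet s) (hst : s ⊆ t) (hae : s =ᵐ[μ] t)
    (hmaps : MapsTo f s s) (hf : AEMeasurable f (μ.restrict s))
    (hinv : ∀ A ⊆ t, MeasurableSet A → μ (f ⁻¹' A ∩ t) = μ A) :
    (μ.restrict s).map f = μ.restrict s := by
  ext A hA
  have hpre : f ⁻¹' A ∩ s = f ⁻¹' (A ∩ s) ∩ s := by
    ext x
    exact ⟨fun ⟨hxA, hxs⟩ => ⟨⟨hxA, hmaps hxs⟩, hxs⟩, fun ⟨⟨hxA, _⟩, hxs⟩ => ⟨hxA, hxs⟩⟩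
  rw [Measure.map_apply_of_aemeasurable hf hA, Measure.restrict_apply' hs, hpre,
    measure_congr ((EventuallyEq.refl _ _).inter hae),
    hinv _ (inter_subset_right.trans hst) (hA.inter hs), Measure.restrict_apply hA]

lemma StrictAntiOn.strictAnti_of_rightInvOn {s : Set ℝ} {Ψ g : ℝ → ℝ} (hΨ : StrictAntiOn Ψ s)
    (hg : ∀ y, g y ∈ s ∧ Ψ (g y) = y) : StrictAnti g := by
  intro y₁ y₂ hlt
  by_contra! hle
  have := hΨ.antitoneOn (hg y₁).1 (hg y₂).1 hle
  rw [(hg y₁).2, (hg y₂).2] at this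
  exact this.not_gt hlt

theorem stmt7_general
    (Ψ Ψinv : ℝ → ℝ)
    (hΨcont : ContinuousOn Ψ (Set.Ioo 0 1))
    (hΨanti : StrictAntiOn Ψ (Set.Ioo 0 1))
    (hinv2 : ∀ y : ℝ, Ψinv y ∈ Set.Ioo (0:ℝ) 1 ∧ Ψ (Ψinv y) = y)
    (a b : ℝ) (ha : 0 < a)
    (f : ℝ → ℝ)
    (hf : ∀ x ∈ Set.Ioo (0:ℝ) 1, f x = Ψinv (Ψ x + a * (x - b)))
    (μ : MeasureTheory.Measure ℝ) [MeasureTheory.IsProbabilityMeasure μ]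
    (hsupp : μ (Set.Icc (0:ℝ) 1) = 1)
    (hinvmeas : ∀ A : Set ℝ, A ⊆ Set.Icc (0:ℝ) 1 → MeasurableSet A →
      μ (f ⁻¹' A ∩ Set.Icc (0:ℝ) 1) = μ A)
    (hends : μ ({0, 1} : Set ℝ) = 0) :
    ∫ x in Set.Icc (0:ℝ) 1, x ∂μ = b := by
  set ν := μ.restrict (Ioo (0:ℝ) 1)
  have hIoo : Ioo (0:ℝ) 1 =ᵐ[μ] Icc 0 1 :=
    ae_eq_set.mpr ⟨by rw [sdiff_eq_empty.mpr Ioo_subset_Icc_self, measure_empty],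
      by rwa [Icc_sdiff_Ioo_same zero_le_one]⟩
  have : IsProbabilityMeasure ν := ⟨by rw [Measure.restrict_apply_univ, measure_congr hIoo, hsupp]⟩
  have hΨf : ∀ x ∈ Ioo (0:ℝ) 1, Ψ (f x) - Ψ x = a * (x - b) := fun x hx => by
    rw [hf x hx, (hinv2 _).2]; ring
  have hΨν : AEMeasurable Ψ ν := hΨcont.aemeasurable measurableSet_Ioo
  have hfν : AEMeasurable f ν := by
    have hg : AEMeasurable (fun x => Ψ x + a * (x - b)) ν := hΨν.add (by fun_prop)
    refine ((hΨanti.strictAnti_of_rightInvOn hinv2).antitone.measurable.comp_aemeasurable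
      hg).congr ?_
    filter_upwards [ae_restrict_mem measurableSet_Ioo] with x hx
    exact (hf x hx).symm
  have hmap : ν.map f = ν := map_restrict_eq_of_preimage_inter measurableSet_Ioo
    Ioo_subset_Icc_self hIoo (fun x hx => hf x hx ▸ (hinv2 _).1) hfν hinvmeas
  have hid : Integrable (fun x : ℝ => x) ν :=
    (continuous_id.integrableOn_Icc (a := 0) (b := 1)).mono_set Ioo_subset_Icc_self
  have hΨfν : (fun x => Ψ (f x) - Ψ x) =ᵐ[ν] fun x => a * (x - b) :=
    ae_restrict_of_forall_mem measurableSet_Ioo hΨf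
  have hcob : ∫ x, a * (x - b) ∂ν = 0 := by
    rw [← integral_comp_sub_eq_zero_of_map_eq hfν hmap hΨν
      ((integrable_congr hΨfν).mpr ((hid.sub (integrable_const b)).const_mul a))]
    exact integral_congr_ae hΨfν.symm
  rw [integral_const_mul, integral_sub hid (integrable_const b), integral_const, probReal_univ,
    one_smul, mul_eq_zero, sub_eq_zero] at hcob
  rw [← Measure.restrict_congr_set hIoo]
  exact hcob.resolve_left ha.ne'

theorem stmt7
    (Ψ Ψinv : ℝ → ℝ)
    (hΨcont : ContinuousOn Ψ (Set.Ioo 0 1))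
    (hΨanti : StrictAntiOn Ψ (Set.Ioo 0 1))
    (hΨbij : Set.BijOn Ψ (Set.Ioo 0 1) Set.univ)
    (hΨsym : ∀ x ∈ Set.Ioo (0:ℝ) 1, Ψ (1 - x) = -Ψ x)
    (hinv1 : ∀ x ∈ Set.Ioo (0:ℝ) 1, Ψinv (Ψ x) = x)
    (hinv2 : ∀ y : ℝ, Ψinv y ∈ Set.Ioo (0:ℝ) 1 ∧ Ψ (Ψinv y) = y)
    (a b : ℝ) (ha : 0 < a) (hb : b ∈ Set.Ioo (0:ℝ) 1)
    (f : ℝ → ℝ) (hf0 : f 0 = 0) (hf1 : f 1 = 1)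
    (hf : ∀ x ∈ Set.Ioo (0:ℝ) 1, f x = Ψinv (Ψ x + a * (x - b)))
    (μ : MeasureTheory.Measure ℝ) [MeasureTheory.IsProbabilityMeasure μ]
    (hsupp : μ (Set.Icc (0:ℝ) 1) = 1)
    (hinvmeas : ∀ A : Set ℝ, A ⊆ Set.Icc (0:ℝ) 1 → MeasurableSet A →
      μ (f ⁻¹' A ∩ Set.Icc (0:ℝ) 1) = μ A)
    (hends : μ ({0, 1} : Set ℝ) = 0) :
    ∫ x in Set.Icc (0:ℝ) 1, x ∂μ = b :=
  stmt7_general Ψ Ψinv hΨcont hΨanti hinv2 a b ha f hf μ hsupp hinvmeas hends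
end

section
/- The map f_{a,b} is differentiable at its interior fixed point b with f′_{a,b}(b) = (Ψ′(b) + a)/Ψ′(b). Consequently, |f′_{a,b}(b)| < 1 if and only if 0 < a < −2Ψ′(b); i.e., the Nash equilibrium b is a (locally) attracting fixed point precisely when a ∈ (0, −2Ψ′(b)), and |f′_{a,b}(b)| > 1 when a > −2Ψ′(b). -/
/-!
Since `Ψ ∘ Ψinv = id` and `Ψ` is strictly decreasing, `Ψinv` is strictly decreasing with open
range `(0, 1)`, hence continuous, so the inverse function theorem gives `Ψinv' (Ψ b) = 1 / Ψ' b`.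
As the inner map `x ↦ Ψ x + a (x - b)` sends `b` to `Ψ b`, the chain rule yields
`f' b = (Ψ' b + a) / Ψ' b = 1 + a / Ψ' b`, and the stability conditions are elementary
inequalities for this number when `Ψ' b < 0`.
-/

open Set

theorem StrictAntiOn.strictAnti_of_rightInverse {α β : Type*} [LinearOrder α] [LinearOrder β]
    {Ψ : α → β} {g : β → α} {s : Set α} (hΨ : StrictAntiOn Ψ s)
    (hg : ∀ y, g y ∈ s ∧ Ψ (g y) = y) : StrictAnti g := by
  intro y₁ y₂ h
  rwa [← hΨ.lt_iff_gt (hg y₁).1 (hg y₂).1, (hg y₁).2, (hg y₂).2]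

theorem Antitone.continuous_of_isOpen_range {α β : Type*} [LinearOrder α] [TopologicalSpace α]
    [OrderTopology α] [LinearOrder β] [TopologicalSpace β] [OrderTopology β] [DenselyOrdered β]
    {f : α → β} (hf : Antitone f) (hr : IsOpen (range f)) : Continuous f :=
  continuous_iff_continuousAt.2 fun x =>
    continuousAt_of_monotoneOn_of_image_mem_nhds (f := OrderDual.toDual ∘ f)
      (hf.dual_right.monotoneOn univ) Filter.univ_mem
      (by rw [image_univ]; exact hr.mem_nhds (mem_range_self x))

theorem hasDerivAt_rightInverse_comp_add_mul_sub {Ψ g : ℝ → ℝ} {d a b : ℝ}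
    (hΨ : HasDerivAt Ψ d b) (hd : d ≠ 0) (hg : ContinuousAt g (Ψ b)) (hgΨ : g (Ψ b) = b)
    (hΨg : ∀ y, Ψ (g y) = y) :
    HasDerivAt (fun x => g (Ψ x + a * (x - b))) ((d + a) / d) b := by
  have hg' : HasDerivAt g d⁻¹ (Ψ b) :=
    .of_local_left_inverse hg (hgΨ.symm ▸ hΨ) hd (.of_forall hΨg)
  have hinner : HasDerivAt (fun x => Ψ x + a * (x - b)) (d + a) b :=
    hΨ.add (by simpa using ((hasDerivAt_id b).sub_const b).const_mul a)
  rw [div_eq_inv_mul]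
  exact hg'.comp_of_eq b hinner (by simp)

theorem abs_add_div_lt_one_iff {d a : ℝ} (hd : d < 0) :
    |(d + a) / d| < 1 ↔ 0 < a ∧ a < -2 * d := by
  rw [abs_lt, lt_div_iff_of_neg hd, div_lt_iff_of_neg hd]
  constructor <;> rintro ⟨h₁, h₂⟩ <;> constructor <;> linarith

theorem one_lt_abs_add_div {d a : ℝ} (hd : d < 0) (ha : -2 * d < a) : 1 < |(d + a) / d| := by
  have hlt : (d + a) / d < -1 := by rw [div_lt_iff_of_neg hd]; linarith
  rw [abs_of_neg (by linarith)]
  linarith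

theorem stmt9_general
    (Ψ Ψinv : ℝ → ℝ)
    (hΨanti : StrictAntiOn Ψ (Set.Ioo 0 1))
    (hinv1 : ∀ x ∈ Set.Ioo (0:ℝ) 1, Ψinv (Ψ x) = x)
    (hinv2 : ∀ y : ℝ, Ψinv y ∈ Set.Ioo (0:ℝ) 1 ∧ Ψ (Ψinv y) = y)
    (hΨdiff : ∀ x ∈ Set.Ioo (0:ℝ) 1, DifferentiableAt ℝ Ψ x)
    (hΨderivNeg : ∀ x ∈ Set.Ioo (0:ℝ) 1, deriv Ψ x < 0)
    (a b : ℝ) (hb : b ∈ Set.Ioo (0:ℝ) 1)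
    (f : ℝ → ℝ)
    (hf : ∀ x ∈ Set.Ioo (0:ℝ) 1, f x = Ψinv (Ψ x + a * (x - b))) :
    HasDerivAt f ((deriv Ψ b + a) / deriv Ψ b) b ∧
    (|(deriv Ψ b + a) / deriv Ψ b| < 1 ↔ (0 < a ∧ a < -2 * deriv Ψ b)) ∧
    (-2 * deriv Ψ b < a → 1 < |(deriv Ψ b + a) / deriv Ψ b|) := by
  have hneg := hΨderivNeg b hb
  have hrange : range Ψinv = Ioo 0 1 :=
    (range_subset_iff.2 fun y => (hinv2 y).1).antisymm fun x hx => ⟨Ψ x, hinv1 x hx⟩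
  have hcont : Continuous Ψinv :=
    (hΨanti.strictAnti_of_rightInverse hinv2).antitone.continuous_of_isOpen_range
      (hrange ▸ isOpen_Ioo)
  have hderiv := hasDerivAt_rightInverse_comp_add_mul_sub (a := a) (hΨdiff b hb).hasDerivAt
    hneg.ne hcont.continuousAt (hinv1 b hb) fun y => (hinv2 y).2
  refine ⟨hderiv.congr_of_eventuallyEq ?_, abs_add_div_lt_one_iff hneg, one_lt_abs_add_div hneg⟩
  filter_upwards [isOpen_Ioo.mem_nhds hb] using hf

theorem stmt9
    (Ψ Ψinv : ℝ → ℝ)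
    (hΨcont : ContinuousOn Ψ (Set.Ioo 0 1))
    (hΨanti : StrictAntiOn Ψ (Set.Ioo 0 1))
    (hΨbij : Set.BijOn Ψ (Set.Ioo 0 1) Set.univ)
    (hΨsym : ∀ x ∈ Set.Ioo (0:ℝ) 1, Ψ (1 - x) = -Ψ x)
    (hinv1 : ∀ x ∈ Set.Ioo (0:ℝ) 1, Ψinv (Ψ x) = x)
    (hinv2 : ∀ y : ℝ, Ψinv y ∈ Set.Ioo (0:ℝ) 1 ∧ Ψ (Ψinv y) = y)
    (hΨdiff : ∀ x ∈ Set.Ioo (0:ℝ) 1, DifferentiableAt ℝ Ψ x)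
    (hΨderivCont : ContinuousOn (deriv Ψ) (Set.Ioo (0:ℝ) 1))
    (hΨderivNeg : ∀ x ∈ Set.Ioo (0:ℝ) 1, deriv Ψ x < 0)
    (a b : ℝ) (ha : 0 < a) (hb : b ∈ Set.Ioo (0:ℝ) 1)
    (f : ℝ → ℝ) (hf0 : f 0 = 0) (hf1 : f 1 = 1)
    (hf : ∀ x ∈ Set.Ioo (0:ℝ) 1, f x = Ψinv (Ψ x + a * (x - b))) :
    HasDerivAt f ((deriv Ψ b + a) / deriv Ψ b) b ∧
    (|(deriv Ψ b + a) / deriv Ψ b| < 1 ↔ (0 < a ∧ a < -2 * deriv Ψ b)) ∧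
    (-2 * deriv Ψ b < a → 1 < |(deriv Ψ b + a) / deriv Ψ b|) :=
  stmt9_general Ψ Ψinv hΨanti hinv1 hinv2 hΨdiff hΨderivNeg a b hb f hf
end

section
/- Assume Ψ‴ < 0 on (0,1) and 0 < a < −2Ψ′(b). Then f_{a,b} has no periodic orbit of period 2 in (0,1): every x ∈ (0,1) with f_{a,b}(f_{a,b}(x)) = x satisfies f_{a,b}(x) = x. -/
/-! A 2-cycle `x ↦ y ↦ x` gives `Ψ y = Ψ x + a (x - b)` and `Ψ x = Ψ y + a (y - b)`; adding,
`x + y = 2b`, and then `k := Ψ + (a/2)·id` satisfies `k x = k y`. As `Ψ‴ < 0`, `k'` is concave, so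
`k' t + k' (x + y - t) ≤ 2 k' b = 2 Ψ' b + a < 0`. Hence `t ↦ k (x + y - t) - k t` has positive
derivative between `x` and `y` yet vanishes at both ends, which Rolle's theorem forbids unless
`x = y`. -/

open Set

theorem ConcaveOn.add_le_two_mul_midpoint {g : ℝ → ℝ} {s : Set ℝ} (hg : ConcaveOn ℝ s g)
    {u v : ℝ} (hu : u ∈ s) (hv : v ∈ s) : g u + g v ≤ 2 * g ((u + v) / 2) := by
  have h := hg.2 hu hv (by norm_num : (0 : ℝ) ≤ 1 / 2) (by norm_num : (0 : ℝ) ≤ 1 / 2)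
    (by norm_num)
  simp only [smul_eq_mul] at h
  rw [show 1 / 2 * u + 1 / 2 * v = (u + v) / 2 by ring] at h
  linarith

theorem eq_of_map_eq_of_concaveOn_deriv {k k' : ℝ → ℝ} {s : Set ℝ} (hs : Convex ℝ s)
    (hk : ∀ t ∈ s, HasDerivAt k (k' t) t) (hk' : ConcaveOn ℝ s k') {x y : ℝ} (hx : x ∈ s)
    (hy : y ∈ s) (hmid : k' ((x + y) / 2) < 0) (hxy : k x = k y) : x = y := by
  wlog hlt : x < y generalizing x y
  · rcases (not_lt.mp hlt).eq_or_lt with h | h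
    · exact h.symm
    · exact (this hy hx (by rwa [add_comm]) hxy.symm h).symm
  have hIcc : Icc x y ⊆ s := hs.ordConnected.out hx hy
  have hrefl : ∀ t ∈ Icc x y, x + y - t ∈ s := fun t ht =>
    hIcc ⟨by linarith [ht.2], by linarith [ht.1]⟩
  have hderiv : ∀ t ∈ Icc x y,
      HasDerivAt (fun t => k (x + y - t) - k t) (-k' (x + y - t) - k' t) t := fun t ht =>
    (((hk _ (hrefl t ht)).comp t ((hasDerivAt_id' t).const_sub (x + y))).sub
      (hk t (hIcc ht))).congr_deriv (by ring)
  obtain ⟨c, hc, hc0⟩ := exists_hasDerivAt_eq_zero hlt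
    (fun t ht => (hderiv t ht).continuousAt.continuousWithinAt)
    (by simp only [add_sub_cancel_right, add_sub_cancel_left, hxy, sub_self])
    (fun t ht => hderiv t (Ioo_subset_Icc_self ht))
  have hsum := hk'.add_le_two_mul_midpoint (hIcc (Ioo_subset_Icc_self hc))
    (hrefl c (Ioo_subset_Icc_self hc))
  rw [show (c + (x + y - c)) / 2 = (x + y) / 2 by ring] at hsum
  linarith

theorem stmt10_general
    (Ψ Ψinv : ℝ → ℝ)
    (hinv2 : ∀ y : ℝ, Ψinv y ∈ Set.Ioo (0:ℝ) 1 ∧ Ψ (Ψinv y) = y)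
    (hΨd1 : ∀ x ∈ Set.Ioo (0:ℝ) 1, DifferentiableAt ℝ Ψ x)
    (hΨd2 : ∀ x ∈ Set.Ioo (0:ℝ) 1, DifferentiableAt ℝ (deriv Ψ) x)
    (hΨd3 : ∀ x ∈ Set.Ioo (0:ℝ) 1, DifferentiableAt ℝ (deriv (deriv Ψ)) x)
    (hΨd3neg : ∀ x ∈ Set.Ioo (0:ℝ) 1, deriv (deriv (deriv Ψ)) x < 0)
    (a b : ℝ) (ha : 0 < a)
    (hattr : a < -2 * deriv Ψ b)
    (f : ℝ → ℝ)
    (hf : ∀ x ∈ Set.Ioo (0:ℝ) 1, f x = Ψinv (Ψ x + a * (x - b))) :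
    ∀ x ∈ Set.Ioo (0:ℝ) 1, f (f x) = x → f x = x := by
  intro x hx hfx
  have hconc : ConcaveOn ℝ (Ioo 0 1) (deriv Ψ) :=
    concaveOn_of_deriv2_nonpos' (convex_Ioo 0 1) (fun t ht => (hΨd2 t ht).differentiableWithinAt)
      (fun t ht => (hΨd3 t ht).differentiableWithinAt) fun t ht => (hΨd3neg t ht).le
  obtain ⟨hy, hΨy⟩ := hinv2 (Ψ x + a * (x - b))
  rw [← hf x hx] at hy hΨy
  have hΨx : Ψ x = Ψ (f x) + a * (f x - b) := by
    have h := (hinv2 (Ψ (f x) + a * (f x - b))).2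
    rwa [← hf _ hy, hfx] at h
  have hsum : (x + f x) / 2 = b := by
    have : a * (x + f x - 2 * b) = a * 0 := by linarith
    linarith [mul_left_cancel₀ ha.ne' this]
  refine (eq_of_map_eq_of_concaveOn_deriv (k := fun t => Ψ t + a / 2 * t)
    (k' := fun t => deriv Ψ t + a / 2) (convex_Ioo 0 1)
    (fun t ht => ?_) (hconc.add_const (a / 2)) hx hy ?_ ?_).symm
  · exact ((hΨd1 t ht).hasDerivAt.add ((hasDerivAt_id' t).const_mul (a / 2))).congr_deriv
      (by rw [mul_one])
  · rw [hsum]; linarith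
  · linarith

theorem stmt10
    (Ψ Ψinv : ℝ → ℝ)
    (hΨcont : ContinuousOn Ψ (Set.Ioo 0 1))
    (hΨanti : StrictAntiOn Ψ (Set.Ioo 0 1))
    (hΨbij : Set.BijOn Ψ (Set.Ioo 0 1) Set.univ)
    (hΨsym : ∀ x ∈ Set.Ioo (0:ℝ) 1, Ψ (1 - x) = -Ψ x)
    (hinv1 : ∀ x ∈ Set.Ioo (0:ℝ) 1, Ψinv (Ψ x) = x)
    (hinv2 : ∀ y : ℝ, Ψinv y ∈ Set.Ioo (0:ℝ) 1 ∧ Ψ (Ψinv y) = y)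
    (hΨd1 : ∀ x ∈ Set.Ioo (0:ℝ) 1, DifferentiableAt ℝ Ψ x)
    (hΨd2 : ∀ x ∈ Set.Ioo (0:ℝ) 1, DifferentiableAt ℝ (deriv Ψ) x)
    (hΨd3 : ∀ x ∈ Set.Ioo (0:ℝ) 1, DifferentiableAt ℝ (deriv (deriv Ψ)) x)
    (hΨderivNeg : ∀ x ∈ Set.Ioo (0:ℝ) 1, deriv Ψ x < 0)
    (hΨd3neg : ∀ x ∈ Set.Ioo (0:ℝ) 1, deriv (deriv (deriv Ψ)) x < 0)
    (a b : ℝ) (ha : 0 < a) (hb : b ∈ Set.Ioo (0:ℝ) 1)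
    (hattr : a < -2 * deriv Ψ b)
    (f : ℝ → ℝ) (hf0 : f 0 = 0) (hf1 : f 1 = 1)
    (hf : ∀ x ∈ Set.Ioo (0:ℝ) 1, f x = Ψinv (Ψ x + a * (x - b))) :
    ∀ x ∈ Set.Ioo (0:ℝ) 1, f (f x) = x → f x = x :=
  stmt10_general Ψ Ψinv hinv2 hΨd1 hΨd2 hΨd3 hΨd3neg a b ha hattr f hf
end

section
/- Assume Ψ‴ < 0 on (0,1) and that b is an attracting fixed point of f_{a,b}, i.e., 0 < a < −2Ψ′(b). Then the trajectories of all points of (0,1) converge to the Nash equilibrium: for every x ∈ (0,1), lim_{n→∞} f_{a,b}ⁿ(x) = b. -/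
/-!
Since `Ψ‴ < 0`, `Ψ'` is strictly concave, so `Ψ'(b - s) + Ψ'(b + s) < 2 Ψ'(b)` for `s > 0`;
integrating over `s ∈ (0, t)` gives `Ψ(b - t) - Ψ(b + t) > -2 Ψ'(b) t > a t`. As `Ψ` is decreasing
and `Ψ(f z) = Ψ z + a (z - b)`, this puts `f z` strictly between `z` and its mirror image `2b - z`,
so `|fⁿ x - b|` decreases to some limit `D`. A cluster point `y` of the orbit and its image
`f y` are then both at distance `D` from `b`. The point `y` is not an endpoint of `(0, 1)`: if
`y = 0`, then `D = b` and the whole orbit lies in `[2b, 1)`. So `f` is continuous at `y`, which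
forces `y = b` and `D = 0`.
-/

open Set Filter Topology

theorem StrictConcaveOn.map_sub_add_map_add_lt {g : ℝ → ℝ} {s : Set ℝ} {b t : ℝ}
    (hg : StrictConcaveOn ℝ s g) (h₁ : b - t ∈ s) (h₂ : b + t ∈ s) (ht : t ≠ 0) :
    g (b - t) + g (b + t) < 2 * g b := by
  have key := hg.2 h₁ h₂ (by contrapose! ht; linarith) one_half_pos one_half_pos (by norm_num)
  have hmid : (1 / 2 : ℝ) • (b - t) + (1 / 2 : ℝ) • (b + t) = b := by
    simp only [smul_eq_mul]; ring
  rw [hmid, smul_eq_mul, smul_eq_mul] at key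
  linarith

theorem sub_lt_two_mul_deriv_mul_of_strictConcaveOn_deriv {g : ℝ → ℝ} {p q b t : ℝ}
    (hg : ∀ x ∈ Ioo p q, DifferentiableAt ℝ g x) (hconc : StrictConcaveOn ℝ (Ioo p q) (deriv g))
    (ht : 0 < t) (h₁ : b - t ∈ Ioo p q) (h₂ : b + t ∈ Ioo p q) :
    g (b + t) - g (b - t) < 2 * deriv g b * t := by
  have hmem₁ : ∀ s ∈ Icc 0 t, b - s ∈ Ioo p q := fun s hs =>
    ⟨by linarith [h₁.1, hs.2], by linarith [h₂.2, hs.1]⟩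
  have hmem₂ : ∀ s ∈ Icc 0 t, b + s ∈ Ioo p q := fun s hs =>
    ⟨by linarith [h₁.1, hs.1], by linarith [h₂.2, hs.2]⟩
  set h : ℝ → ℝ := fun s => 2 * deriv g b * s - g (b + s) + g (b - s)
  have hderiv : ∀ s ∈ Icc 0 t, HasDerivAt h
      (2 * deriv g b - deriv g (b + s) - deriv g (b - s)) s := by
    intro s hs
    have hadd := (hg _ (hmem₂ s hs)).hasDerivAt.comp s ((hasDerivAt_id s).const_add b)
    have hsub := (hg _ (hmem₁ s hs)).hasDerivAt.comp s ((hasDerivAt_id s).const_sub b)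
    exact ((((hasDerivAt_id s).const_mul (2 * deriv g b)).sub hadd).add hsub).congr_deriv
      (by ring)
  have hmono : StrictMonoOn h (Icc 0 t) := by
    refine strictMonoOn_of_deriv_pos (convex_Icc 0 t)
      (fun s hs => (hderiv s hs).continuousAt.continuousWithinAt) fun s hs => ?_
    rw [interior_Icc] at hs
    rw [(hderiv s (Ioo_subset_Icc_self hs)).deriv]
    have := hconc.map_sub_add_map_add_lt (hmem₁ s (Ioo_subset_Icc_self hs))
      (hmem₂ s (Ioo_subset_Icc_self hs)) hs.1.ne'
    linarith
  have := hmono (left_mem_Icc.2 ht.le) (right_mem_Icc.2 ht.le) ht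
  simp only [h, mul_zero, add_zero, sub_zero] at this
  linarith

theorem continuous_of_strictAntiOn_of_inverse {Ψ Ψinv : ℝ → ℝ} {p q : ℝ}
    (hanti : StrictAntiOn Ψ (Ioo p q)) (hleft : ∀ x ∈ Ioo p q, Ψinv (Ψ x) = x)
    (hright : ∀ y, Ψinv y ∈ Ioo p q ∧ Ψ (Ψinv y) = y) : Continuous Ψinv := by
  have hinv_anti : StrictAnti Ψinv := fun y z hyz => by
    by_contra! h
    have := hanti.antitoneOn (hright y).1 (hright z).1 h
    rw [(hright y).2, (hright z).2] at this
    linarith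
  refine continuous_iff_continuousAt.2 fun y => ?_
  -- `-Ψinv` is strictly monotone and maps `ℝ` onto the open interval `(-q, -p)`.
  have hneg : ContinuousAt (fun y => -Ψinv y) y := by
    refine (hinv_anti.neg.strictMonoOn univ).continuousAt_of_image_mem_nhds univ_mem ?_
    have hy := (hright y).1
    refine mem_of_superset (Ioo_mem_nhds (neg_lt_neg hy.2) (neg_lt_neg hy.1)) fun z hz => ?_
    have hz' : -z ∈ Ioo p q := ⟨by linarith [hz.2], by linarith [hz.1]⟩
    exact ⟨Ψ (-z), trivial, by simp only [hleft _ hz', neg_neg]⟩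
  simpa only [Pi.neg_def, neg_neg] using hneg.neg

theorem abs_sub_lt_of_map_eq_add_mul_sub {Ψ : ℝ → ℝ} {p q a b z w : ℝ}
    (hanti : StrictAntiOn Ψ (Ioo p q)) (ha : 0 < a)
    (hgap : ∀ t > 0, b - t ∈ Ioo p q → b + t ∈ Ioo p q → a * t < Ψ (b - t) - Ψ (b + t))
    (hz : z ∈ Ioo p q) (hw : w ∈ Ioo p q) (hzb : z ≠ b) (hstep : Ψ w = Ψ z + a * (z - b)) :
    |w - b| < |z - b| := by
  rcases hzb.lt_or_gt with hlt | hgt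
  · have hzw : z < w := (hanti.lt_iff_gt hw hz).1 (by linarith [mul_pos ha (sub_pos.2 hlt)])
    have hw' : w < 2 * b - z := by
      by_contra! h
      have hmem : 2 * b - z ∈ Ioo p q := ⟨by linarith [hz.1], by linarith [hw.2]⟩
      have := hgap (b - z) (by linarith) (by rwa [sub_sub_cancel]) (by convert hmem using 1; ring)
      rw [sub_sub_cancel, show b + (b - z) = 2 * b - z by ring] at this
      have := (hanti.le_iff_ge hw hmem).2 h
      linarith
    rw [abs_of_neg (by linarith : z - b < 0), abs_lt]
    constructor <;> linarith
  · have hwz : w < z := (hanti.lt_iff_gt hz hw).1 (by linarith [mul_pos ha (sub_pos.2 hgt)])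
    have hw' : 2 * b - z < w := by
      by_contra! h
      have hmem : 2 * b - z ∈ Ioo p q := ⟨by linarith [hw.1], by linarith [hz.2]⟩
      have := hgap (z - b) (by linarith) (by convert hmem using 1; ring) (by rwa [add_sub_cancel])
      rw [add_sub_cancel, show b - (z - b) = 2 * b - z by ring] at this
      have := (hanti.le_iff_ge hmem hw).2 h
      linarith
    rw [abs_of_pos (by linarith : 0 < z - b), abs_lt]
    constructor <;> linarith

theorem mem_Ioo_of_tendsto_of_le_abs_sub {v : ℕ → ℝ} {p q b y D : ℝ} (hb : b ∈ Ioo p q)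
    (hv : ∀ k, v k ∈ Ioo p q) (hD : ∀ k, D ≤ |v k - b|) (hy : Tendsto v atTop (𝓝 y))
    (hyD : |y - b| = D) : y ∈ Ioo p q := by
  have hyIcc : y ∈ Icc p q :=
    isClosed_Icc.mem_of_tendsto hy (Eventually.of_forall fun k => Ioo_subset_Icc_self (hv k))
  refine ⟨hyIcc.1.lt_of_ne fun hpy => ?_, hyIcc.2.lt_of_ne fun hyq => ?_⟩
  · have hDb : D = b - p := by rw [← hyD, ← hpy, abs_of_neg (by linarith [hb.1])]; ring
    have hbound : ∀ k, b + D ≤ v k := fun k => by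
      cases abs_cases (v k - b) <;> linarith [hD k, (hv k).1]
    linarith [ge_of_tendsto' hy hbound, hb.1]
  · have hDb : D = q - b := by rw [← hyD, hyq, abs_of_pos (by linarith [hb.2])]
    have hbound : ∀ k, v k ≤ b - D := fun k => by
      cases abs_cases (v k - b) <;> linarith [hD k, (hv k).2]
    linarith [le_of_tendsto' hy hbound, hb.2]

theorem tendsto_iterate_of_abs_sub_lt {f : ℝ → ℝ} {p q b x : ℝ} (hb : b ∈ Ioo p q)
    (hmaps : MapsTo f (Ioo p q) (Ioo p q)) (hcont : ContinuousOn f (Ioo p q)) (hfb : f b = b)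
    (hcontr : ∀ z ∈ Ioo p q, z ≠ b → |f z - b| < |z - b|) (hx : x ∈ Ioo p q) :
    Tendsto (fun n => f^[n] x) atTop (𝓝 b) := by
  set u : ℕ → ℝ := fun n => f^[n] x
  have hu : ∀ n, u n ∈ Ioo p q := fun n => hmaps.iterate n hx
  have hsucc : ∀ n, u (n + 1) = f (u n) := fun n => Function.iterate_succ_apply' f n x
  have hanti : Antitone fun n => |u n - b| := antitone_nat_of_succ_le fun n => by
    rcases eq_or_ne (u n) b with h | h
    · simp [hsucc, h, hfb]
    · rw [hsucc]; exact (hcontr _ (hu n) h).le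
  obtain ⟨D, hD⟩ : ∃ D, Tendsto (fun n => |u n - b|) atTop (𝓝 D) :=
    ⟨_, tendsto_atTop_ciInf hanti ⟨0, by rintro _ ⟨n, rfl⟩; exact abs_nonneg _⟩⟩
  obtain ⟨y, -, φ, hφ, hy⟩ :=
    tendsto_subseq_of_bounded (Metric.isBounded_Icc p q) fun n => Ioo_subset_Icc_self (hu n)
  have hyD : |y - b| = D := tendsto_nhds_unique (hy.sub_const b).abs (hD.comp hφ.tendsto_atTop)
  have hyI : y ∈ Ioo p q :=
    mem_Ioo_of_tendsto_of_le_abs_sub hb (fun k => hu (φ k)) (fun k => hanti.le_of_tendsto hD _)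
      hy hyD
  have hfyD : |f y - b| = D := by
    have hfy : Tendsto (fun k => u (φ k + 1)) atTop (𝓝 (f y)) := by
      simpa only [hsucc, Function.comp_def] using
        (hcont.continuousAt (isOpen_Ioo.mem_nhds hyI)).tendsto.comp hy
    exact tendsto_nhds_unique (hfy.sub_const b).abs
      (hD.comp ((tendsto_add_atTop_nat 1).comp hφ.tendsto_atTop))
  have hyb : y = b := by
    by_contra h
    exact (hcontr y hyI h).ne (hfyD.trans hyD.symm)
  rw [hyb, sub_self, abs_zero] at hyD
  rw [tendsto_iff_dist_tendsto_zero]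
  simpa only [Real.dist_eq, hyD] using hD

theorem stmt11_general
    (Ψ Ψinv : ℝ → ℝ)
    (hΨcont : ContinuousOn Ψ (Set.Ioo 0 1))
    (hΨanti : StrictAntiOn Ψ (Set.Ioo 0 1))
    (hinv1 : ∀ x ∈ Set.Ioo (0:ℝ) 1, Ψinv (Ψ x) = x)
    (hinv2 : ∀ y : ℝ, Ψinv y ∈ Set.Ioo (0:ℝ) 1 ∧ Ψ (Ψinv y) = y)
    (hΨd1 : ∀ x ∈ Set.Ioo (0:ℝ) 1, DifferentiableAt ℝ Ψ x)
    (hΨd2 : ∀ x ∈ Set.Ioo (0:ℝ) 1, DifferentiableAt ℝ (deriv Ψ) x)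
    (hΨd3neg : ∀ x ∈ Set.Ioo (0:ℝ) 1, deriv (deriv (deriv Ψ)) x < 0)
    (a b : ℝ) (ha : 0 < a) (hb : b ∈ Set.Ioo (0:ℝ) 1)
    (hattr : a < -2 * deriv Ψ b)
    (f : ℝ → ℝ)
    (hf : ∀ x ∈ Set.Ioo (0:ℝ) 1, f x = Ψinv (Ψ x + a * (x - b))) :
    ∀ x ∈ Set.Ioo (0:ℝ) 1,
      Filter.Tendsto (fun n : ℕ => f^[n] x) Filter.atTop (nhds b) := by
  have hstep : ∀ z ∈ Ioo 0 1, f z ∈ Ioo 0 1 ∧ Ψ (f z) = Ψ z + a * (z - b) := fun z hz =>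
    hf z hz ▸ hinv2 _
  have hfb : f b = b := by rw [hf b hb, sub_self, mul_zero, add_zero, hinv1 b hb]
  have hconc : StrictConcaveOn ℝ (Ioo 0 1) (deriv Ψ) :=
    strictConcaveOn_of_deriv2_neg' (convex_Ioo 0 1)
      (fun x hx => (hΨd2 x hx).continuousAt.continuousWithinAt) hΨd3neg
  have hgap : ∀ t > 0, b - t ∈ Ioo 0 1 → b + t ∈ Ioo 0 1 → a * t < Ψ (b - t) - Ψ (b + t) :=
    fun t ht h₁ h₂ => by
      linarith [mul_lt_mul_of_pos_right hattr ht,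
        sub_lt_two_mul_deriv_mul_of_strictConcaveOn_deriv hΨd1 hconc ht h₁ h₂]
  have hcont : ContinuousOn f (Ioo 0 1) := by
    refine ContinuousOn.congr ?_ hf
    exact (continuous_of_strictAntiOn_of_inverse hΨanti hinv1 hinv2).comp_continuousOn
      (hΨcont.add (by fun_prop))
  intro x hx
  exact tendsto_iterate_of_abs_sub_lt hb (fun z hz => (hstep z hz).1) hcont hfb
    (fun z hz hzb => abs_sub_lt_of_map_eq_add_mul_sub hΨanti ha hgap hz (hstep z hz).1 hzb
      (hstep z hz).2) hx

theorem stmt11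
    (Ψ Ψinv : ℝ → ℝ)
    (hΨcont : ContinuousOn Ψ (Set.Ioo 0 1))
    (hΨanti : StrictAntiOn Ψ (Set.Ioo 0 1))
    (hΨbij : Set.BijOn Ψ (Set.Ioo 0 1) Set.univ)
    (hΨsym : ∀ x ∈ Set.Ioo (0:ℝ) 1, Ψ (1 - x) = -Ψ x)
    (hinv1 : ∀ x ∈ Set.Ioo (0:ℝ) 1, Ψinv (Ψ x) = x)
    (hinv2 : ∀ y : ℝ, Ψinv y ∈ Set.Ioo (0:ℝ) 1 ∧ Ψ (Ψinv y) = y)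
    (hΨd1 : ∀ x ∈ Set.Ioo (0:ℝ) 1, DifferentiableAt ℝ Ψ x)
    (hΨd2 : ∀ x ∈ Set.Ioo (0:ℝ) 1, DifferentiableAt ℝ (deriv Ψ) x)
    (hΨd3 : ∀ x ∈ Set.Ioo (0:ℝ) 1, DifferentiableAt ℝ (deriv (deriv Ψ)) x)
    (hΨderivNeg : ∀ x ∈ Set.Ioo (0:ℝ) 1, deriv Ψ x < 0)
    (hΨd3neg : ∀ x ∈ Set.Ioo (0:ℝ) 1, deriv (deriv (deriv Ψ)) x < 0)
    (a b : ℝ) (ha : 0 < a) (hb : b ∈ Set.Ioo (0:ℝ) 1)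
    (hattr : a < -2 * deriv Ψ b)
    (f : ℝ → ℝ) (hf0 : f 0 = 0) (hf1 : f 1 = 1)
    (hf : ∀ x ∈ Set.Ioo (0:ℝ) 1, f x = Ψinv (Ψ x + a * (x - b))) :
    ∀ x ∈ Set.Ioo (0:ℝ) 1,
      Filter.Tendsto (fun n : ℕ => f^[n] x) Filter.atTop (nhds b) :=
  stmt11_general Ψ Ψinv hΨcont hΨanti hinv1 hinv2 hΨd1 hΨd2 hΨd3neg a b ha hb hattr f hf
end

section
/- If b ∈ (0,1) and b ≠ 1/2, then there exists A > 0 such that for every a > A the map f_{a,b} is Li–Yorke chaotic: there exists an uncountable set S ⊆ [0,1] such that for all x, y ∈ S with x ≠ y, liminf_{n→∞} |f_{a,b}ⁿ(x) − f_{a,b}ⁿ(y)| = 0 and limsup_{n→∞} |f_{a,b}ⁿ(x) − f_{a,b}ⁿ(y)| > 0. -/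
/-!
For `b < 1/2` and large `a`, the map `f` stretches `P = [p₁, b/4]`, where `Ψ p₁ = a b + Ψ (b/2)`,
across `Q = [b/2, b + 1/2]`, and `Q` across `[p₁, b + 1/2]`; so under `f^[2]` each of `P`, `Q`
covers both. Carving nested subintervals gives, for every `σ : ℕ → Bool`, a nonempty closed
interval of points whose `f^[2]`-orbit visits `P`, `Q` as prescribed by `σ`. These intervals are
pairwise disjoint, and uncountably many of them cannot all have interior, so for some `τ` the
cylinders shrink to a point. The orbits of points whose itineraries alternate longer and longer
blocks of `τ` with blocks copied from an arbitrary `t` then come together along the `τ`-blocks and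
lie in different intervals, `b/4` apart, wherever the `t`'s differ. The case `b > 1/2` reduces to
`b < 1/2` by conjugating with `x ↦ 1 - x`.
-/

open Set Filter

lemma exists_Icc_image_eq_Icc_of_le {F : ℝ → ℝ} {p q c d : ℝ} (hpq : p ≤ q) (hcd : c ≤ d)
    (hF : ContinuousOn F (Icc p q)) (hp : F p = c) (hq : F q = d) :
    ∃ u v, p ≤ u ∧ u ≤ v ∧ v ≤ q ∧ F '' Icc u v = Icc c d := by
  have hcpt : ∀ {a e : ℝ}, p ≤ a → IsCompact (Icc a q ∩ F ⁻¹' {e}) := fun hpa =>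
    isCompact_Icc.of_isClosed_subset
      ((hF.mono (Icc_subset_Icc_left hpa)).preimage_isClosed_of_isClosed isClosed_Icc
        isClosed_singleton) inter_subset_left
  -- `u` is the last point of `[p, q]` where `F = c`, `v` the first point after `u` where `F = d`
  obtain ⟨u, ⟨⟨hpu, huq⟩, hu : F u = c⟩, hu_max⟩ :=
    (hcpt le_rfl).exists_isGreatest ⟨p, ⟨le_rfl, hpq⟩, hp⟩
  obtain ⟨v, ⟨⟨huv, hvq⟩, hv : F v = d⟩, hv_min⟩ :=
    (hcpt hpu).exists_isLeast ⟨q, ⟨huq, le_rfl⟩, hq⟩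
  have hFuv : ContinuousOn F (Icc u v) := hF.mono (Icc_subset_Icc hpu hvq)
  refine ⟨u, v, hpu, huv, hvq, (image_subset_iff.2 fun x hx => ?_).antisymm ?_⟩
  · constructor
    · by_contra! hxc
      obtain ⟨y, hy, hyc⟩ := intermediate_value_Icc hx.2 (hFuv.mono (Icc_subset_Icc_left hx.1))
        ⟨hxc.le, hv ▸ hcd⟩
      have := hu_max ⟨⟨hpu.trans (hx.1.trans hy.1), hy.2.trans hvq⟩, hyc⟩
      exact hxc.ne' (le_antisymm hx.1 (hy.1.trans this) ▸ hu.symm)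
    · by_contra! hxd
      obtain ⟨y, hy, hyd⟩ := intermediate_value_Icc hx.1 (hFuv.mono (Icc_subset_Icc_right hx.2))
        ⟨hu ▸ hcd, hxd.le⟩
      have := hv_min ⟨⟨hy.1, hy.2.trans (hx.2.trans hvq)⟩, hyd⟩
      exact hxd.ne (le_antisymm hx.2 (this.trans hy.2) ▸ hv).symm
  · rw [← hu, ← hv]; exact intermediate_value_Icc huv hFuv

lemma exists_Icc_image_eq_Icc {F : ℝ → ℝ} {u v c d : ℝ} (hcd : c ≤ d)
    (hF : ContinuousOn F (Icc u v)) (h : Icc c d ⊆ F '' Icc u v) :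
    ∃ u' v', u ≤ u' ∧ u' ≤ v' ∧ v' ≤ v ∧ F '' Icc u' v' = Icc c d := by
  obtain ⟨p, ⟨hup, hpv⟩, hp⟩ := h (left_mem_Icc.2 hcd)
  obtain ⟨q, ⟨huq, hqv⟩, hq⟩ := h (right_mem_Icc.2 hcd)
  rcases le_total p q with hpq | hqp
  · obtain ⟨u', v', h₁, h₂, h₃, himg⟩ :=
      exists_Icc_image_eq_Icc_of_le hpq hcd (hF.mono (Icc_subset_Icc hup hqv)) hp hq
    exact ⟨u', v', hup.trans h₁, h₂, h₃.trans hqv, himg⟩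
  · -- a decreasing crossing becomes an increasing one for `x ↦ F (-x)`
    have hG : ContinuousOn (fun x => F (-x)) (Icc (-p) (-q)) :=
      hF.comp continuousOn_neg fun x hx => ⟨by linarith [hx.2], by linarith [hx.1]⟩
    obtain ⟨u', v', h₁, h₂, h₃, himg⟩ := exists_Icc_image_eq_Icc_of_le (neg_le_neg hqp) hcd hG
      (by simpa using hp) (by simpa using hq)
    refine ⟨-v', -u', by linarith, by linarith, by linarith, ?_⟩
    rw [← himg, ← image_neg_Icc, image_image]

lemma exists_forall_exists_sub_lt_of_uncountable {ι : Type*} [Uncountable ι] {l r : ι → ℕ → ℝ}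
    (hl : ∀ i, Monotone (l i)) (hr : ∀ i, Antitone (r i))
    (hdisj : Pairwise fun i j => Disjoint (⋂ n, Icc (l i n) (r i n)) (⋂ n, Icc (l j n) (r j n))) :
    ∃ i, ∀ ε > 0, ∃ n, r i n - l i n < ε := by
  by_contra! h
  choose ε hε hle using h
  -- otherwise each intersection contains a nonempty open interval, so `ι` would be countable
  have hsub : ∀ i, Ioo (⨆ n, l i n) ((⨆ n, l i n) + ε i) ⊆ ⋂ n, Icc (l i n) (r i n) := by
    intro i x hx
    have hlr : ∀ m n, l i m ≤ r i n - ε i := fun m n => by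
      linarith [hle i (max m n), hl i (le_max_left m n), hr i (le_max_right m n)]
    have hbdd : BddAbove (range (l i)) := ⟨r i 0 - ε i, forall_mem_range.2 fun m => hlr m 0⟩
    refine mem_iInter.2 fun n => ⟨(le_ciSup hbdd n).trans hx.1.le, ?_⟩
    linarith [hx.2, ciSup_le fun m => hlr m n]
  refine not_countable_univ (PairwiseDisjoint.countable_of_isOpen (s := fun i => Ioo _ _)
    (fun i _ j _ hij => (hdisj hij).mono (hsub i) (hsub j)) (fun _ _ => isOpen_Ioo)
    fun i _ => nonempty_Ioo.2 (lt_add_of_pos_right _ (hε i)))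

structure MutuallyCovers (F : ℝ → ℝ) (I : Bool → ℝ × ℝ) : Prop where
  fst_le_snd : ∀ s, (I s).1 ≤ (I s).2
  continuousOn : ∀ s, ContinuousOn F (Icc (I s).1 (I s).2)
  subset_image : ∀ s t, Icc (I t).1 (I t).2 ⊆ F '' Icc (I s).1 (I s).2

open Classical in
noncomputable def carve (F : ℝ → ℝ) (D T : ℝ × ℝ) : ℝ × ℝ :=
  if h : ∃ E : ℝ × ℝ, D.1 ≤ E.1 ∧ E.1 ≤ E.2 ∧ E.2 ≤ D.2 ∧ F '' Icc E.1 E.2 = Icc T.1 T.2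
  then h.choose else D

lemma carve_spec {F : ℝ → ℝ} {D T : ℝ × ℝ} (hT : T.1 ≤ T.2)
    (hF : ContinuousOn F (Icc D.1 D.2)) (h : Icc T.1 T.2 ⊆ F '' Icc D.1 D.2) :
    D.1 ≤ (carve F D T).1 ∧ (carve F D T).1 ≤ (carve F D T).2 ∧ (carve F D T).2 ≤ D.2 ∧
      F '' Icc (carve F D T).1 (carve F D T).2 = Icc T.1 T.2 := by
  obtain ⟨u, v, hE⟩ := exists_Icc_image_eq_Icc hT hF h
  have hex : ∃ E : ℝ × ℝ, D.1 ≤ E.1 ∧ E.1 ≤ E.2 ∧ E.2 ≤ D.2 ∧ F '' Icc E.1 E.2 = Icc T.1 T.2 :=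
    ⟨(u, v), hE⟩
  rw [carve, dif_pos hex]
  exact hex.choose_spec

/-- An interval of points `x` with `F^[i] x ∈ I (σ i)` for `i ≤ n`, which `F` maps onto the
cylinder of depth `n - 1` of the shifted sequence. -/
noncomputable def cylinder (F : ℝ → ℝ) (I : Bool → ℝ × ℝ) : ℕ → (ℕ → Bool) → ℝ × ℝ
  | 0, σ => I (σ 0)
  | n + 1, σ => carve F (cylinder F I n σ) (cylinder F I n fun i => σ (i + 1))

lemma cylinder_congr {F : ℝ → ℝ} {I : Bool → ℝ × ℝ} :
    ∀ n {σ σ' : ℕ → Bool}, (∀ i ≤ n, σ i = σ' i) → cylinder F I n σ = cylinder F I n σ'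
  | 0, _, _, h => congrArg I (h 0 le_rfl)
  | n + 1, _, _, h => by
    rw [cylinder, cylinder, cylinder_congr n fun i hi => h i (by omega),
      cylinder_congr n fun i hi => h (i + 1) (by omega)]

def cylinderInter (F : ℝ → ℝ) (I : Bool → ℝ × ℝ) (σ : ℕ → Bool) : Set ℝ :=
  ⋂ n, Icc (cylinder F I n σ).1 (cylinder F I n σ).2

namespace MutuallyCovers

variable {F : ℝ → ℝ} {I : Bool → ℝ × ℝ}

lemma cylinder_invariant (h : MutuallyCovers F I) : ∀ n σ,
    (cylinder F I n σ).1 ≤ (cylinder F I n σ).2 ∧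
    ContinuousOn F (Icc (cylinder F I n σ).1 (cylinder F I n σ).2) ∧
    Icc (cylinder F I n fun i => σ (i + 1)).1 (cylinder F I n fun i => σ (i + 1)).2 ⊆
      F '' Icc (cylinder F I n σ).1 (cylinder F I n σ).2
  | 0, σ => ⟨h.fst_le_snd _, h.continuousOn _, h.subset_image _ _⟩
  | n + 1, σ => by
    obtain ⟨-, hF, hsub⟩ := cylinder_invariant h n σ
    obtain ⟨hle', hF', hsub'⟩ := cylinder_invariant h n fun i => σ (i + 1)
    obtain ⟨h₁, h₂, h₃, himg⟩ := carve_spec hle' hF hsub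
    obtain ⟨h₁', -, h₃', -⟩ := carve_spec (cylinder_invariant h n _).1 hF' hsub'
    exact ⟨h₂, hF.mono (Icc_subset_Icc h₁ h₃), (Icc_subset_Icc h₁' h₃').trans himg.symm.subset⟩

lemma cylinder_succ (h : MutuallyCovers F I) (n : ℕ) (σ : ℕ → Bool) :
    (cylinder F I n σ).1 ≤ (cylinder F I (n + 1) σ).1 ∧
    (cylinder F I (n + 1) σ).2 ≤ (cylinder F I n σ).2 ∧
    F '' Icc (cylinder F I (n + 1) σ).1 (cylinder F I (n + 1) σ).2 =
      Icc (cylinder F I n fun i => σ (i + 1)).1 (cylinder F I n fun i => σ (i + 1)).2 := by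
  obtain ⟨-, hF, hsub⟩ := h.cylinder_invariant n σ
  obtain ⟨h₁, -, h₃, himg⟩ := carve_spec (h.cylinder_invariant n _).1 hF hsub
  exact ⟨h₁, h₃, himg⟩

lemma monotone_cylinder_fst (h : MutuallyCovers F I) (σ : ℕ → Bool) :
    Monotone fun n => (cylinder F I n σ).1 :=
  monotone_nat_of_le_succ fun n => (h.cylinder_succ n σ).1

lemma antitone_cylinder_snd (h : MutuallyCovers F I) (σ : ℕ → Bool) :
    Antitone fun n => (cylinder F I n σ).2 :=
  antitone_nat_of_succ_le fun n => (h.cylinder_succ n σ).2.1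

lemma ciSup_mem_cylinderInter (h : MutuallyCovers F I) (σ : ℕ → Bool) :
    (⨆ n, (cylinder F I n σ).1) ∈ cylinderInter F I σ :=
  (h.monotone_cylinder_fst σ).ciSup_mem_iInter_Icc_of_antitone (h.antitone_cylinder_snd σ)
    fun n => (h.cylinder_invariant n σ).1

lemma mapsTo_cylinderInter (h : MutuallyCovers F I) (σ : ℕ → Bool) :
    MapsTo F (cylinderInter F I σ) (cylinderInter F I fun i => σ (i + 1)) := fun _ hx =>
  mem_iInter.2 fun n => (h.cylinder_succ n σ).2.2 ▸ mem_image_of_mem F (mem_iInter.1 hx (n + 1))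

lemma iterate_mem_cylinderInter (h : MutuallyCovers F I) {σ : ℕ → Bool} {x : ℝ}
    (hx : x ∈ cylinderInter F I σ) : ∀ n, F^[n] x ∈ cylinderInter F I fun i => σ (i + n)
  | 0 => hx
  | n + 1 => by
    rw [Function.iterate_succ_apply']
    simpa only [add_assoc, add_comm 1 n] using
      h.mapsTo_cylinderInter _ (h.iterate_mem_cylinderInter hx n)

lemma iterate_mem_Icc (h : MutuallyCovers F I) {σ : ℕ → Bool} {x : ℝ}
    (hx : x ∈ cylinderInter F I σ) (n : ℕ) : F^[n] x ∈ Icc (I (σ n)).1 (I (σ n)).2 := by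
  simpa only [cylinder, zero_add] using mem_iInter.1 (h.iterate_mem_cylinderInter hx n) 0

end MutuallyCovers

instance : Uncountable (ℕ → Bool) := by
  rw [← not_countable_iff, ← Cardinal.mk_le_aleph0_iff, not_le]
  simpa using Cardinal.cantor Cardinal.aleph0

def interleave (τ t : ℕ → Bool) (m : ℕ) : Bool :=
  if Even (Nat.log 2 m) then τ (m - 2 ^ Nat.log 2 m) else t (m - 2 ^ Nat.log 2 m)

lemma interleave_two_pow_add {τ t : ℕ → Bool} {k i : ℕ} (hi : i < 2 ^ k) :
    interleave τ t (2 ^ k + i) = if Even k then τ i else t i := by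
  have hlog : Nat.log 2 (2 ^ k + i) = k :=
    Nat.log_eq_of_pow_le_of_lt_pow (by omega) (by rw [pow_succ]; omega)
  simp [interleave, hlog]

lemma le_abs_sub_of_mem_Icc {I : Bool → ℝ × ℝ} {s t : Bool} (hst : s ≠ t) {u v : ℝ}
    (hu : u ∈ Icc (I s).1 (I s).2) (hv : v ∈ Icc (I t).1 (I t).2) :
    (I true).1 - (I false).2 ≤ |u - v| := by
  cases s <;> cases t <;> simp only [ne_eq, not_true_eq_false] at hst
  · exact (abs_sub_comm u v).symm ▸ le_abs.2 (Or.inl (by linarith [hu.2, hv.1]))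
  · exact le_abs.2 (Or.inl (by linarith [hu.1, hv.2]))

namespace MutuallyCovers

variable {F : ℝ → ℝ} {I : Bool → ℝ × ℝ}

lemma iterate_mem_cylinder (h : MutuallyCovers F I) {σ τ : ℕ → Bool} {x : ℝ}
    (hx : x ∈ cylinderInter F I σ) {m n : ℕ} (hστ : ∀ i ≤ m, σ (i + n) = τ i) :
    F^[n] x ∈ Icc (cylinder F I m τ).1 (cylinder F I m τ).2 :=
  cylinder_congr m hστ ▸ mem_iInter.1 (h.iterate_mem_cylinderInter hx n) m

lemma le_abs_iterate_sub (h : MutuallyCovers F I) {σ σ' : ℕ → Bool} {x y : ℝ}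
    (hx : x ∈ cylinderInter F I σ) (hy : y ∈ cylinderInter F I σ') {n : ℕ} (hn : σ n ≠ σ' n) :
    (I true).1 - (I false).2 ≤ |F^[n] x - F^[n] y| :=
  le_abs_sub_of_mem_Icc hn (h.iterate_mem_Icc hx n) (h.iterate_mem_Icc hy n)

theorem exists_scrambled (h : MutuallyCovers F I) (hgap : (I false).2 < (I true).1) :
    ∃ S ⊆ Icc (I false).1 (I true).2, ¬ S.Countable ∧ S.Pairwise fun x y =>
      (∀ ε > 0, ∃ᶠ n in atTop, |F^[n] x - F^[n] y| < ε) ∧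
      ∃ᶠ n in atTop, (I true).1 - (I false).2 ≤ |F^[n] x - F^[n] y| := by
  obtain ⟨τ, hτ⟩ := exists_forall_exists_sub_lt_of_uncountable h.monotone_cylinder_fst
    h.antitone_cylinder_snd fun σ σ' hne => disjoint_left.2 fun x hx hx' => by
      obtain ⟨n, hn⟩ := Function.ne_iff.1 hne
      have := h.le_abs_iterate_sub hx hx' hn
      rw [sub_self, abs_zero] at this
      linarith
  set x : (ℕ → Bool) → ℝ := fun t => ⨆ n, (cylinder F I n (interleave τ t)).1
  have hx : ∀ t, x t ∈ cylinderInter F I (interleave τ t) := fun t =>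
    h.ciSup_mem_cylinderInter _
  have hfar : ∀ t t', t ≠ t' →
      ∃ᶠ n in atTop, (I true).1 - (I false).2 ≤ |F^[n] (x t) - F^[n] (x t')| := by
    intro t t' htt'
    obtain ⟨j, hj⟩ := Function.ne_iff.1 htt'
    refine frequently_atTop.2 fun N => ⟨2 ^ (2 * (j + N) + 1) + j, ?_, ?_⟩
    · have := (Nat.lt_two_pow_self (n := 2 * (j + N) + 1)); omega
    · refine h.le_abs_iterate_sub (hx t) (hx t') ?_
      have hjk : j < 2 ^ (2 * (j + N) + 1) := lt_of_lt_of_le Nat.lt_two_pow_self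
        (Nat.pow_le_pow_right two_pos (by omega))
      simpa [interleave_two_pow_add hjk] using hj
  have hclose : ∀ t t', ∀ ε > 0, ∃ᶠ n in atTop, |F^[n] (x t) - F^[n] (x t')| < ε := by
    intro t t' ε hε
    obtain ⟨m, hm⟩ := hτ ε hε
    refine frequently_atTop.2 fun N => ⟨2 ^ (2 * (m + N)), ?_, ?_⟩
    · have := (Nat.lt_two_pow_self (n := 2 * (m + N))); omega
    · have hτ' : ∀ t, ∀ i ≤ m, interleave τ t (i + 2 ^ (2 * (m + N))) = τ i := fun t i hi => by
        have him : i < 2 ^ (2 * (m + N)) := lt_of_lt_of_le (lt_of_le_of_lt hi Nat.lt_two_pow_self)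
          (Nat.pow_le_pow_right two_pos (by omega))
        rw [add_comm, interleave_two_pow_add him, if_pos (even_two_mul _)]
      have h₁ := h.iterate_mem_cylinder (hx t) (hτ' t)
      have h₂ := h.iterate_mem_cylinder (hx t') (hτ' t')
      exact abs_sub_lt_iff.2 ⟨by linarith [h₁.2, h₂.1], by linarith [h₁.1, h₂.2]⟩
  have hinj : Function.Injective x := fun t t' hxt => by
    by_contra htt'
    obtain ⟨n, hn⟩ := (hfar t t' htt').exists
    simp only [hxt, sub_self, abs_zero] at hn
    linarith
  refine ⟨range x, ?_, fun hS => not_countable_univ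
    ((mapsTo_range x univ).countable_of_injOn hinj.injOn hS), ?_⟩
  · have hI : ∀ s, Icc (I s).1 (I s).2 ⊆ Icc (I false).1 (I true).2 := by
      rintro (_ | _)
      · exact Icc_subset_Icc_right (hgap.le.trans (h.fst_le_snd true))
      · exact Icc_subset_Icc_left ((h.fst_le_snd false).trans hgap.le)
    rintro _ ⟨t, rfl⟩
    exact hI _ (h.iterate_mem_Icc (hx t) 0)
  · rintro _ ⟨t, rfl⟩ _ ⟨t', rfl⟩ hne
    exact ⟨hclose t t', hfar t t' fun htt' => hne (htt' ▸ rfl)⟩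

end MutuallyCovers

def IsLiYorkePair (f : ℝ → ℝ) (x y : ℝ) : Prop :=
  liminf (fun n : ℕ => |f^[n] x - f^[n] y|) atTop = 0 ∧
    0 < limsup (fun n : ℕ => |f^[n] x - f^[n] y|) atTop

lemma isLiYorkePair_of_frequently {f : ℝ → ℝ} {x y δ : ℝ} (hδ : 0 < δ)
    (hbdd : BddAbove (range fun n => |f^[n] x - f^[n] y|))
    (hclose : ∀ ε > 0, ∃ᶠ n in atTop, |f^[n] x - f^[n] y| < ε)
    (hfar : ∃ᶠ n in atTop, δ ≤ |f^[n] x - f^[n] y|) : IsLiYorkePair f x y := by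
  have hbdd' : IsBoundedUnder (· ≤ ·) atTop fun n => |f^[n] x - f^[n] y| :=
    hbdd.isBoundedUnder_of_range
  refine ⟨le_antisymm (le_of_forall_pos_le_add fun ε hε => ?_) ?_,
    hδ.trans_le (le_limsup_of_frequently_le hfar hbdd')⟩
  · rw [zero_add]
    exact liminf_le_of_frequently_le ((hclose ε hε).mono fun _ hn => hn.le)
      (isBoundedUnder_of ⟨0, fun _ => abs_nonneg _⟩)
  · exact le_liminf_of_le hbdd'.isCoboundedUnder_ge (Eventually.of_forall fun _ => abs_nonneg _)

lemma frequently_of_frequently_iterate {α : Type*} {f : α → α} {k : ℕ} (hk : 0 < k)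
    {p : α → α → Prop} {x y : α} (h : ∃ᶠ n in atTop, p ((f^[k])^[n] x) ((f^[k])^[n] y)) :
    ∃ᶠ n in atTop, p (f^[n] x) (f^[n] y) := by
  simp_rw [← Function.iterate_mul] at h
  exact (tendsto_id.const_mul_atTop' hk).frequently h

theorem exists_scrambled_of_covers {f : ℝ → ℝ} {s : Set ℝ} (hfc : ContinuousOn f s)
    (hfs : MapsTo f s s) (hs : Bornology.IsBounded s) {p₁ p₂ q₁ q₂ : ℝ} (hp : p₁ ≤ p₂)
    (hpq : p₂ < q₁) (hq : q₁ ≤ q₂) (hsub : Icc p₁ q₂ ⊆ s)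
    (hp_cov : Icc q₁ q₂ ⊆ f '' Icc p₁ p₂) (hq_cov : Icc p₁ q₂ ⊆ f '' Icc q₁ q₂) :
    ∃ S ⊆ Icc p₁ q₂, ¬ S.Countable ∧ S.Pairwise (IsLiYorkePair f) := by
  have hqJ : Icc q₁ q₂ ⊆ Icc p₁ q₂ := Icc_subset_Icc_left (by linarith)
  have hpJ : Icc p₁ p₂ ⊆ Icc p₁ q₂ := Icc_subset_Icc_right (by linarith)
  have himage : ∀ X, f^[2] '' X = f '' (f '' X) := fun X => image_comp f f X
  have hI : MutuallyCovers f^[2] fun t => cond t (q₁, q₂) (p₁, p₂) := by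
    refine ⟨?_, ?_, ?_⟩
    · rintro (_ | _)
      exacts [hp, hq]
    · rintro (_ | _)
      exacts [(hfc.iterate hfs 2).mono (hpJ.trans hsub), (hfc.iterate hfs 2).mono (hqJ.trans hsub)]
    · have hcov : ∀ t, Icc p₁ q₂ ⊆ f^[2] '' Icc (cond t (q₁, q₂) (p₁, p₂)).1
          (cond t (q₁, q₂) (p₁, p₂)).2 := by
        rintro (_ | _) <;> rw [himage]
        · exact hq_cov.trans (image_mono hp_cov)
        · exact hq_cov.trans ((image_mono hqJ).trans (image_mono hq_cov))
      rintro s (_ | _)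
      exacts [hpJ.trans (hcov s), hqJ.trans (hcov s)]
  obtain ⟨S, hSJ, hSc, hSp⟩ := hI.exists_scrambled hpq
  obtain ⟨C, hC⟩ := Metric.isBounded_iff.1 hs
  refine ⟨S, hSJ, hSc, fun x hx y hy hxy => ?_⟩
  obtain ⟨hclose, hfar⟩ := hSp hx hy hxy
  refine isLiYorkePair_of_frequently (sub_pos.2 hpq) ⟨C, forall_mem_range.2 fun n => ?_⟩
    (fun ε hε => frequently_of_frequently_iterate (p := fun u v => |u - v| < ε) two_pos
      (hclose ε hε))
    (frequently_of_frequently_iterate (p := fun u v => q₁ - p₂ ≤ |u - v|) two_pos hfar)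
  exact (Real.dist_eq _ _).symm.trans_le
    (hC (hfs.iterate n (hsub (hSJ hx))) (hfs.iterate n (hsub (hSJ hy))))

section Forel

variable {Ψ Ψinv : ℝ → ℝ}

lemma le_Ψinv_iff (hΨ : StrictAntiOn Ψ (Ioo 0 1))
    (hinv : ∀ y, Ψinv y ∈ Ioo (0:ℝ) 1 ∧ Ψ (Ψinv y) = y) {x y : ℝ} (hx : x ∈ Ioo (0:ℝ) 1) :
    x ≤ Ψinv y ↔ y ≤ Ψ x := by
  conv_rhs => rw [← (hinv y).2]
  exact (hΨ.le_iff_ge (hinv y).1 hx).symm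

lemma Ψinv_le_iff (hΨ : StrictAntiOn Ψ (Ioo 0 1))
    (hinv : ∀ y, Ψinv y ∈ Ioo (0:ℝ) 1 ∧ Ψ (Ψinv y) = y) {x y : ℝ} (hx : x ∈ Ioo (0:ℝ) 1) :
    Ψinv y ≤ x ↔ Ψ x ≤ y := by
  conv_rhs => rw [← (hinv y).2]
  exact (hΨ.le_iff_ge hx (hinv y).1).symm

lemma Ψinv_lt_iff (hΨ : StrictAntiOn Ψ (Ioo 0 1))
    (hinv : ∀ y, Ψinv y ∈ Ioo (0:ℝ) 1 ∧ Ψ (Ψinv y) = y) {x y : ℝ} (hx : x ∈ Ioo (0:ℝ) 1) :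
    Ψinv y < x ↔ Ψ x < y := by
  simpa only [not_le] using (le_Ψinv_iff hΨ hinv hx).not

lemma continuous_Ψinv (hΨ : StrictAntiOn Ψ (Ioo 0 1))
    (hinv₁ : ∀ x ∈ Ioo (0:ℝ) 1, Ψinv (Ψ x) = x)
    (hinv₂ : ∀ y, Ψinv y ∈ Ioo (0:ℝ) 1 ∧ Ψ (Ψinv y) = y) : Continuous Ψinv := by
  have hmono : Monotone fun y => Ψinv (-y) := fun y y' hyy' =>
    (Ψinv_le_iff hΨ hinv₂ (hinv₂ _).1).2 ((hinv₂ _).2.trans_le (neg_le_neg hyy'))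
  have hcont : Continuous fun y => Ψinv (-y) := continuous_iff_continuousAt.2 fun y =>
    continuousAt_of_monotoneOn_of_image_mem_nhds (hmono.monotoneOn univ) univ_mem
      (mem_of_superset (isOpen_Ioo.mem_nhds (hinv₂ _).1) fun x hx =>
        ⟨-Ψ x, trivial, by simp only [neg_neg, hinv₁ x hx]⟩)
  simpa only [Function.comp_def, neg_neg] using hcont.comp continuous_neg

variable {a b : ℝ} {f : ℝ → ℝ}

lemma continuousOn_forel (hΨcont : ContinuousOn Ψ (Ioo 0 1)) (hΨ : StrictAntiOn Ψ (Ioo 0 1))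
    (hinv₁ : ∀ x ∈ Ioo (0:ℝ) 1, Ψinv (Ψ x) = x)
    (hinv₂ : ∀ y, Ψinv y ∈ Ioo (0:ℝ) 1 ∧ Ψ (Ψinv y) = y)
    (hf : ∀ x ∈ Ioo (0:ℝ) 1, f x = Ψinv (Ψ x + a * (x - b))) : ContinuousOn f (Ioo 0 1) :=
  ((continuous_Ψinv hΨ hinv₁ hinv₂).comp_continuousOn
    (hΨcont.add (by fun_prop))).congr hf

lemma mapsTo_forel (hinv₂ : ∀ y, Ψinv y ∈ Ioo (0:ℝ) 1 ∧ Ψ (Ψinv y) = y)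
    (hf : ∀ x ∈ Ioo (0:ℝ) 1, f x = Ψinv (Ψ x + a * (x - b))) : MapsTo f (Ioo 0 1) (Ioo 0 1) :=
  fun x hx => hf x hx ▸ (hinv₂ _).1

lemma forel_one_sub (hΨsym : ∀ x ∈ Ioo (0:ℝ) 1, Ψ (1 - x) = -Ψ x)
    (hinv₁ : ∀ x ∈ Ioo (0:ℝ) 1, Ψinv (Ψ x) = x)
    (hinv₂ : ∀ y, Ψinv y ∈ Ioo (0:ℝ) 1 ∧ Ψ (Ψinv y) = y)
    (hf : ∀ x ∈ Ioo (0:ℝ) 1, f x = Ψinv (Ψ x + a * (x - b))) :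
    ∀ x ∈ Ioo (0:ℝ) 1, 1 - f (1 - x) = Ψinv (Ψ x + a * (x - (1 - b))) := by
  have hneg : ∀ y, Ψinv (-y) = 1 - Ψinv y := fun y => by
    obtain ⟨⟨h₀, h₁⟩, hy⟩ := hinv₂ y
    rw [← hinv₁ (1 - Ψinv y) ⟨by linarith, by linarith⟩, hΨsym _ ⟨h₀, h₁⟩, hy]
  intro x hx
  rw [hf (1 - x) ⟨by linarith [hx.2], by linarith [hx.1]⟩, hΨsym x hx,
    show -Ψ x + a * (1 - x - b) = -(Ψ x + a * (x - (1 - b))) by ring, hneg, sub_sub_cancel]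

theorem exists_scrambled_forel_of_lt_half (hΨcont : ContinuousOn Ψ (Ioo 0 1))
    (hΨ : StrictAntiOn Ψ (Ioo 0 1)) (hinv₁ : ∀ x ∈ Ioo (0:ℝ) 1, Ψinv (Ψ x) = x)
    (hinv₂ : ∀ y, Ψinv y ∈ Ioo (0:ℝ) 1 ∧ Ψ (Ψinv y) = y) (hb₀ : 0 < b) (hb : b < 1 / 2) :
    ∃ A > (0:ℝ), ∀ a > A, ∀ f : ℝ → ℝ, (∀ x ∈ Ioo (0:ℝ) 1, f x = Ψinv (Ψ x + a * (x - b))) →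
      ∃ S ⊆ Icc (0:ℝ) 1, ¬ S.Countable ∧ S.Pairwise (IsLiYorkePair f) := by
  have hlarge : ∀ (C : ℝ) {k : ℝ}, 0 < k → ∀ᶠ a in atTop, C < a * k := fun C _ hk =>
    (tendsto_id.atTop_mul_const hk).eventually_gt_atTop C
  -- for large `a`: `p₁ < b/4`, `b + 1/2 ≤ f (b/4)`, `b + 1/2 ≤ f (b/2)` and `f (b + 1/2) ≤ p₁`
  obtain ⟨A, hA⟩ := eventually_atTop.1 <| (eventually_gt_atTop 0).and <|
    (hlarge (Ψ (b / 4) - Ψ (b / 2)) hb₀).and <|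
    (hlarge (Ψ (b / 4) - Ψ (b + 1 / 2)) (by positivity : (0:ℝ) < 3 * b / 4)).and <|
    (hlarge (Ψ (b / 2) - Ψ (b + 1 / 2)) (by positivity : (0:ℝ) < b / 2)).and
    (hlarge (Ψ (b / 2) - Ψ (b + 1 / 2)) (by linarith : (0:ℝ) < 1 / 2 - b))
  refine ⟨max A 1, by positivity, fun a ha f hf => ?_⟩
  obtain ⟨ha₀, h₁, h₂, h₃, h₄⟩ := hA a ((le_max_left A 1).trans ha.le)
  have hfc := continuousOn_forel hΨcont hΨ hinv₁ hinv₂ hf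
  have hle : ∀ {x t : ℝ}, x ∈ Ioo (0:ℝ) 1 → t ∈ Ioo (0:ℝ) 1 →
      Ψ x + a * (x - b) ≤ Ψ t → t ≤ f x := fun hx ht h =>
    hf _ hx ▸ (le_Ψinv_iff hΨ hinv₂ ht).2 h
  have hge : ∀ {x t : ℝ}, x ∈ Ioo (0:ℝ) 1 → t ∈ Ioo (0:ℝ) 1 →
      Ψ t ≤ Ψ x + a * (x - b) → f x ≤ t := fun hx ht h =>
    hf _ hx ▸ (Ψinv_le_iff hΨ hinv₂ ht).2 h
  obtain ⟨hp₁, hΨp₁⟩ := hinv₂ (a * b + Ψ (b / 2))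
  set p₁ := Ψinv (a * b + Ψ (b / 2))
  have hb₄ : b / 4 ∈ Ioo (0:ℝ) 1 := ⟨by linarith, by linarith⟩
  have hb₂ : b / 2 ∈ Ioo (0:ℝ) 1 := ⟨by linarith, by linarith⟩
  have hq₂ : b + 1 / 2 ∈ Ioo (0:ℝ) 1 := ⟨by linarith, by linarith⟩
  have hp₁p₂ : p₁ < b / 4 := (Ψinv_lt_iff hΨ hinv₂ hb₄).2 (by linarith)
  have hJ : Icc p₁ (b + 1 / 2) ⊆ Ioo 0 1 := Icc_subset_Ioo hp₁.1 hq₂.2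
  obtain ⟨S, hS, hSc, hSp⟩ := exists_scrambled_of_covers hfc (mapsTo_forel hinv₂ hf)
    (Metric.isBounded_Ioo 0 1) hp₁p₂.le (by linarith : b / 4 < b / 2) (by linarith) hJ
    ((Icc_subset_Icc (hge hp₁ hb₂ (by nlinarith [hp₁.1])) (hle hb₄ hq₂ (by linarith))).trans
      (intermediate_value_Icc hp₁p₂.le (hfc.mono (Icc_subset_Ioo hp₁.1 hb₄.2))))
    ((Icc_subset_Icc (hge hq₂ hp₁ (by linarith)) (hle hb₂ hq₂ (by linarith))).trans
      (intermediate_value_Icc' (by linarith) (hfc.mono (Icc_subset_Ioo hb₂.1 hq₂.2))))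
  exact ⟨S, hS.trans (Icc_subset_Icc hp₁.1.le hq₂.2.le), hSc, hSp⟩

end Forel

lemma exists_scrambled_of_one_sub {f : ℝ → ℝ}
    (h : ∃ S ⊆ Icc (0:ℝ) 1, ¬ S.Countable ∧ S.Pairwise (IsLiYorkePair fun x => 1 - f (1 - x))) :
    ∃ S ⊆ Icc (0:ℝ) 1, ¬ S.Countable ∧ S.Pairwise (IsLiYorkePair f) := by
  obtain ⟨S, hS, hSc, hSp⟩ := h
  have hinj : Function.Injective fun x : ℝ => 1 - x := sub_right_injective
  have hconj : ∀ n x, f^[n] (1 - x) = 1 - (fun x => 1 - f (1 - x))^[n] x := fun n x =>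
    (Function.Semiconj.iterate_right (f := fun x : ℝ => 1 - x) (fun _ => sub_sub_cancel _ _) n
      x).symm
  refine ⟨(1 - ·) '' S, ?_, fun hc => hSc ((mapsTo_image _ S).countable_of_injOn hinj.injOn hc),
    hinj.injOn.pairwise_image.2 fun x hx y hy hxy => ?_⟩
  · rintro _ ⟨x, hx, rfl⟩
    exact ⟨by linarith [(hS hx).2], by linarith [(hS hx).1]⟩
  · simpa only [Function.onFun, IsLiYorkePair, hconj, sub_sub_sub_cancel_left, abs_sub_comm]
      using hSp hx hy hxy

theorem stmt14_general
    (Ψ Ψinv : ℝ → ℝ)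
    (hΨcont : ContinuousOn Ψ (Set.Ioo 0 1))
    (hΨanti : StrictAntiOn Ψ (Set.Ioo 0 1))
    (hΨsym : ∀ x ∈ Set.Ioo (0:ℝ) 1, Ψ (1 - x) = -Ψ x)
    (hinv1 : ∀ x ∈ Set.Ioo (0:ℝ) 1, Ψinv (Ψ x) = x)
    (hinv2 : ∀ y : ℝ, Ψinv y ∈ Set.Ioo (0:ℝ) 1 ∧ Ψ (Ψinv y) = y)
    (b : ℝ) (hb : b ∈ Set.Ioo (0:ℝ) 1) (hbne : b ≠ 1/2) :
    ∃ A > (0:ℝ), ∀ a > A, ∀ f : ℝ → ℝ, f 0 = 0 → f 1 = 1 →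
      (∀ x ∈ Set.Ioo (0:ℝ) 1, f x = Ψinv (Ψ x + a * (x - b))) →
      ∃ S : Set ℝ, S ⊆ Set.Icc (0:ℝ) 1 ∧ ¬ S.Countable ∧
        ∀ x ∈ S, ∀ y ∈ S, x ≠ y →
          Filter.liminf (fun n : ℕ => |f^[n] x - f^[n] y|) Filter.atTop = 0 ∧
          0 < Filter.limsup (fun n : ℕ => |f^[n] x - f^[n] y|) Filter.atTop := by
  rcases hbne.lt_or_gt with hb' | hb'
  · obtain ⟨A, hA, h⟩ :=
      exists_scrambled_forel_of_lt_half hΨcont hΨanti hinv1 hinv2 hb.1 hb'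
    exact ⟨A, hA, fun a ha f _ _ hf => h a ha f hf⟩
  · obtain ⟨A, hA, h⟩ := exists_scrambled_forel_of_lt_half (b := 1 - b) hΨcont hΨanti hinv1
      hinv2 (by linarith [hb.2]) (by linarith)
    exact ⟨A, hA, fun a ha f _ _ hf =>
      exists_scrambled_of_one_sub (h a ha _ (forel_one_sub hΨsym hinv1 hinv2 hf))⟩

theorem stmt14
    (Ψ Ψinv : ℝ → ℝ)
    (hΨcont : ContinuousOn Ψ (Set.Ioo 0 1))
    (hΨanti : StrictAntiOn Ψ (Set.Ioo 0 1))
    (hΨbij : Set.BijOn Ψ (Set.Ioo 0 1) Set.univ)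
    (hΨsym : ∀ x ∈ Set.Ioo (0:ℝ) 1, Ψ (1 - x) = -Ψ x)
    (hinv1 : ∀ x ∈ Set.Ioo (0:ℝ) 1, Ψinv (Ψ x) = x)
    (hinv2 : ∀ y : ℝ, Ψinv y ∈ Set.Ioo (0:ℝ) 1 ∧ Ψ (Ψinv y) = y)
    (b : ℝ) (hb : b ∈ Set.Ioo (0:ℝ) 1) (hbne : b ≠ 1/2) :
    ∃ A > (0:ℝ), ∀ a > A, ∀ f : ℝ → ℝ, f 0 = 0 → f 1 = 1 →
      (∀ x ∈ Set.Ioo (0:ℝ) 1, f x = Ψinv (Ψ x + a * (x - b))) →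
      ∃ S : Set ℝ, S ⊆ Set.Icc (0:ℝ) 1 ∧ ¬ S.Countable ∧
        ∀ x ∈ S, ∀ y ∈ S, x ≠ y →
          Filter.liminf (fun n : ℕ => |f^[n] x - f^[n] y|) Filter.atTop = 0 ∧
          0 < Filter.limsup (fun n : ℕ => |f^[n] x - f^[n] y|) Filter.atTop :=
  stmt14_general Ψ Ψinv hΨcont hΨanti hΨsym hinv1 hinv2 b hb hbne
end

section
/- If b ∈ (0,1) and b ≠ 1/2, then there exists A > 0 such that for every a > A the map f_{a,b} has periodic orbits of all periods: for every integer n ≥ 1 there exists x ∈ [0,1] with f_{a,b}ⁿ(x) = x whose least period under f_{a,b} equals n. -/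
/-!
For `b < 1/2` and large `a`, `f = f_{a,b}` has a horseshoe: for small `δ` and
`l = Ψ⁻¹(Ψ δ + a b)`, the intervals `B = [l, δ/2]` and `A = [δ, 1 - δ]` satisfy `f(B) ⊇ A` and
`f(A) ⊇ A ∪ B`. Pulling the itinerary `A, …, A, B` of length `n` back through nested closed
intervals yields a fixed point of `fⁿ` whose orbit meets `B` only at time `n - 1`, so its least
period is `n`. For `b > 1/2`, conjugation by `x ↦ 1 - x` turns `f_{a,b}` into `f_{a,1-b}`.
-/

open Set Filter

section IntervalCovering

variable {f : ℝ → ℝ}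

lemma exists_Icc_image_eq_of_le {p q c d : ℝ} (hpq : p ≤ q) (hcd : c ≤ d)
    (hf : ContinuousOn f (Icc p q)) (hp : f p = c) (hq : f q = d) :
    ∃ α β, Icc α β ⊆ Icc p q ∧ f '' Icc α β = Icc c d := by
  -- `β` is the first time after `p` that `f` hits `d`, `α` the last time before `β` it hits `c`.
  have hS : IsCompact (Icc p q ∩ f ⁻¹' {d}) :=
    isCompact_Icc.of_isClosed_subset
      (hf.preimage_isClosed_of_isClosed isClosed_Icc isClosed_singleton) inter_subset_left
  obtain ⟨β, ⟨hβ, hfβ⟩, hβ_least⟩ := hS.exists_isLeast ⟨q, ⟨hpq, le_rfl⟩, hq⟩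
  have hfpβ : ContinuousOn f (Icc p β) := hf.mono (Icc_subset_Icc le_rfl hβ.2)
  have hT : IsCompact (Icc p β ∩ f ⁻¹' {c}) :=
    isCompact_Icc.of_isClosed_subset
      (hfpβ.preimage_isClosed_of_isClosed isClosed_Icc isClosed_singleton) inter_subset_left
  obtain ⟨α, ⟨hα, hfα⟩, hα_greatest⟩ := hT.exists_isGreatest ⟨p, ⟨le_rfl, hβ.1⟩, hp⟩
  replace hfα : f α = c := hfα
  replace hfβ : f β = d := hfβ
  refine ⟨α, β, Icc_subset_Icc hα.1 hβ.2, subset_antisymm ?_ ?_⟩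
  · rintro _ ⟨t, ht, rfl⟩
    constructor
    · by_contra! hlt
      obtain ⟨s, hs, hfs⟩ := intermediate_value_Icc ht.2
        (hfpβ.mono (Icc_subset_Icc (hα.1.trans ht.1) le_rfl)) ⟨hlt.le, hfβ ▸ hcd⟩
      have hsα : s ≤ α := hα_greatest ⟨⟨hα.1.trans (ht.1.trans hs.1), hs.2⟩, hfs⟩
      have hst : s = t := le_antisymm (hsα.trans ht.1) hs.1
      exact hlt.ne (hst ▸ hfs)
    · by_contra! hlt
      obtain ⟨s, hs, hfs⟩ := intermediate_value_Icc ht.1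
        (hfpβ.mono (Icc_subset_Icc hα.1 ht.2)) ⟨hfα ▸ hcd, hlt.le⟩
      have hβs : β ≤ s := hβ_least ⟨⟨hα.1.trans hs.1, hs.2.trans (ht.2.trans hβ.2)⟩, hfs⟩
      have hst : s = t := le_antisymm hs.2 (ht.2.trans hβs)
      exact hlt.ne' (hst ▸ hfs)
  · rw [← hfα, ← hfβ]
    exact intermediate_value_Icc hα.2 (hfpβ.mono (Icc_subset_Icc hα.1 le_rfl))

lemma exists_Icc_image_eq {a b c d : ℝ} (hf : ContinuousOn f (Icc a b))
    (h : Icc c d ⊆ f '' Icc a b) : ∃ α β, Icc α β ⊆ Icc a b ∧ f '' Icc α β = Icc c d := by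
  by_cases hcd : c ≤ d
  swap
  · exact ⟨1, 0, by simp, by simp [Icc_eq_empty hcd]⟩
  obtain ⟨p, hp, hfp⟩ := h ⟨le_rfl, hcd⟩
  obtain ⟨q, hq, hfq⟩ := h ⟨hcd, le_rfl⟩
  rcases le_total p q with hpq | hqp
  · obtain ⟨α, β, hsub, himg⟩ :=
      exists_Icc_image_eq_of_le hpq hcd (hf.mono (Icc_subset_Icc hp.1 hq.2)) hfp hfq
    exact ⟨α, β, hsub.trans (Icc_subset_Icc hp.1 hq.2), himg⟩
  · have hneg : ContinuousOn (f ∘ Neg.neg) (Icc (-p) (-q)) :=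
      hf.comp continuous_neg.continuousOn fun t ht =>
        ⟨by linarith [ht.2, hq.1], by linarith [ht.1, hp.2]⟩
    obtain ⟨α, β, hsub, himg⟩ := exists_Icc_image_eq_of_le (neg_le_neg hqp) hcd hneg
      (by simpa using hfp) (by simpa using hfq)
    have hIcc : ∀ x y : ℝ, Neg.neg '' Icc x y = Icc (-y) (-x) := fun x y => by
      rw [image_neg_eq_neg, neg_Icc]
    refine ⟨-β, -α, ?_, by rw [← hIcc, ← image_comp, himg]⟩
    calc Icc (-β) (-α) = Neg.neg '' Icc α β := (hIcc α β).symm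
      _ ⊆ Neg.neg '' Icc (-p) (-q) := image_mono hsub
      _ = Icc q p := by rw [hIcc, neg_neg, neg_neg]
      _ ⊆ Icc a b := Icc_subset_Icc hq.1 hp.2

lemma exists_fixedPt_of_Icc_subset_image {u v : ℝ} (huv : u ≤ v) (hf : ContinuousOn f (Icc u v))
    (h : Icc u v ⊆ f '' Icc u v) : ∃ x ∈ Icc u v, f x = x := by
  obtain ⟨p, hp, hfp⟩ := h ⟨le_rfl, huv⟩
  obtain ⟨q, hq, hfq⟩ := h ⟨huv, le_rfl⟩
  have hpq := uIcc_subset_Icc hp hq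
  obtain ⟨x, hx, hfx⟩ := intermediate_value_uIcc ((hf.sub continuousOn_id).mono hpq)
    (mem_uIcc.2 (Or.inl ⟨by simp [hfp, hp.1], by simp [hfq, hq.2]⟩) : (0 : ℝ) ∈ _)
  exact ⟨x, hpq hx, sub_eq_zero.1 hfx⟩

lemma exists_Icc_iterate_image_eq (lo hi : ℕ → ℝ) (n : ℕ)
    (hf : ∀ j < n, ContinuousOn f (Icc (lo j) (hi j)))
    (hcov : ∀ j < n, Icc (lo (j + 1)) (hi (j + 1)) ⊆ f '' Icc (lo j) (hi j)) :
    ∃ u v, f^[n] '' Icc u v = Icc (lo n) (hi n) ∧ ContinuousOn f^[n] (Icc u v) ∧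
      ∀ j ≤ n, MapsTo f^[j] (Icc u v) (Icc (lo j) (hi j)) := by
  induction n generalizing lo hi with
  | zero =>
    refine ⟨lo 0, hi 0, by simp, continuousOn_id, fun j hj => ?_⟩
    obtain rfl : j = 0 := by omega
    exact mapsTo_id _
  | succ n ih =>
    obtain ⟨u', v', himg', hcont', hmaps'⟩ := ih (fun j => lo (j + 1)) (fun j => hi (j + 1))
      (fun j hj => hf (j + 1) (by omega)) (fun j hj => hcov (j + 1) (by omega))
    have hsub' : Icc u' v' ⊆ Icc (lo 1) (hi 1) := hmaps' 0 n.zero_le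
    obtain ⟨u, v, hsub, himg⟩ :=
      exists_Icc_image_eq (hf 0 n.succ_pos) (hsub'.trans (hcov 0 n.succ_pos))
    have hmaps : MapsTo f (Icc u v) (Icc u' v') := himg ▸ mapsTo_image f _
    refine ⟨u, v, ?_, ?_, fun j hj => ?_⟩
    · rw [Function.iterate_succ, image_comp, himg, himg']
    · rw [Function.iterate_succ]
      exact hcont'.comp ((hf 0 n.succ_pos).mono hsub) hmaps
    · rcases j with _ | j
      · exact hsub
      · exact fun x hx => hmaps' j (by omega) (hmaps hx)

lemma exists_iterate_eq_self_of_itinerary (lo hi : ℕ → ℝ) (n : ℕ) (h0 : lo 0 ≤ hi 0)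
    (hlo : lo n = lo 0) (hhi : hi n = hi 0)
    (hf : ∀ j < n, ContinuousOn f (Icc (lo j) (hi j)))
    (hcov : ∀ j < n, Icc (lo (j + 1)) (hi (j + 1)) ⊆ f '' Icc (lo j) (hi j)) :
    ∃ x, f^[n] x = x ∧ ∀ j ≤ n, f^[j] x ∈ Icc (lo j) (hi j) := by
  obtain ⟨u, v, himg, hcont, hmaps⟩ := exists_Icc_iterate_image_eq lo hi n hf hcov
  rw [hlo, hhi] at himg
  have huv : u ≤ v :=
    nonempty_Icc.1 (himg ▸ nonempty_Icc.2 h0 : (f^[n] '' Icc u v).Nonempty).of_image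
  have hsub : Icc u v ⊆ Icc (lo 0) (hi 0) := hmaps 0 n.zero_le
  obtain ⟨x, hx, hfx⟩ := exists_fixedPt_of_Icc_subset_image huv hcont (hsub.trans himg.ge)
  exact ⟨x, hfx, fun j hj => hmaps j hj hx⟩

lemma exists_least_period_of_horseshoe {l m α β : ℝ} (hlm : l ≤ m) (hmα : m < α) (hαβ : α ≤ β)
    (hf : ContinuousOn f (Icc l β)) (hfl : f l ≤ α) (hfm : β ≤ f m) (hfα : β ≤ f α)
    (hfβ : f β ≤ l) {n : ℕ} (hn : 1 ≤ n) :
    ∃ x ∈ Icc l β, f^[n] x = x ∧ ∀ k, 1 ≤ k → k < n → f^[k] x ≠ x := by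
  have hA : Icc l β ⊆ f '' Icc α β := (Icc_subset_Icc hfβ hfα).trans
    (intermediate_value_Icc' hαβ (hf.mono (Icc_subset_Icc (by linarith) le_rfl)))
  have hB : Icc α β ⊆ f '' Icc l m := (Icc_subset_Icc hfl hfm).trans
    (intermediate_value_Icc hlm (hf.mono (Icc_subset_Icc le_rfl (by linarith))))
  have hAl : Icc α β ⊆ Icc l β := Icc_subset_Icc (by linarith) le_rfl
  have hBl : Icc l m ⊆ Icc l β := Icc_subset_Icc le_rfl (by linarith)
  rcases hn.eq_or_lt with rfl | hn
  · obtain ⟨x, hx, hfx⟩ := exists_fixedPt_of_Icc_subset_image hαβ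
      (hf.mono hAl) (hAl.trans hA)
    exact ⟨x, hAl hx, hfx, fun k hk hk' => by omega⟩
  -- the itinerary stays in `[α, β]` except at time `n - 1`, when it visits `[l, m]`
  have h0 : 0 ≠ n - 1 := by omega
  have hn' : n ≠ n - 1 := by omega
  obtain ⟨x, hxn, hx⟩ := exists_iterate_eq_self_of_itinerary (f := f)
    (fun j => if j = n - 1 then l else α) (fun j => if j = n - 1 then m else β) n
    (by rw [if_neg h0, if_neg h0]; exact hαβ) (by rw [if_neg h0, if_neg hn'])
    (by rw [if_neg h0, if_neg hn'])
    (fun j _ => hf.mono (by split_ifs <;> [exact hBl; exact hAl]))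
    (fun j _ => by
      split_ifs <;> first | omega | exact hB | exact hBl.trans hA | exact hAl.trans hA)
  refine ⟨x, ?_, hxn, fun k hk hkn hxk => ?_⟩
  · have hx0 := hx 0 n.zero_le
    rw [if_neg h0, if_neg h0] at hx0
    exact hAl hx0
  have hmod : (n - 1) % k ≠ n - 1 := by
    have := Nat.mod_lt (n - 1) (show 0 < k by omega)
    omega
  have hlast := hx (n - 1) (by omega)
  have hfirst := hx ((n - 1) % k) ((Nat.mod_le _ _).trans (Nat.sub_le _ _))
  rw [if_pos rfl, if_pos rfl] at hlast
  rw [if_neg hmod, if_neg hmod,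
    (show Function.IsPeriodicPt f k x from hxk).iterate_mod_apply] at hfirst
  linarith [hlast.2, hfirst.1]

end IntervalCovering

namespace FoReL

def map (Ψ Ψinv : ℝ → ℝ) (a b x : ℝ) : ℝ := Ψinv (Ψ x + a * (x - b))

variable {Ψ Ψinv : ℝ → ℝ}

lemma strictAnti_psiInv (hΨanti : StrictAntiOn Ψ (Ioo 0 1))
    (hinv2 : ∀ y : ℝ, Ψinv y ∈ Ioo (0:ℝ) 1 ∧ Ψ (Ψinv y) = y) : StrictAnti Ψinv := fun s t hst =>
  (hΨanti.lt_iff_gt (hinv2 s).1 (hinv2 t).1).1 (by rwa [(hinv2 s).2, (hinv2 t).2])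

lemma continuous_psiInv (hΨanti : StrictAntiOn Ψ (Ioo 0 1))
    (hinv1 : ∀ x ∈ Ioo (0:ℝ) 1, Ψinv (Ψ x) = x)
    (hinv2 : ∀ y : ℝ, Ψinv y ∈ Ioo (0:ℝ) 1 ∧ Ψ (Ψinv y) = y) : Continuous Ψinv := by
  have hmono : StrictMono (fun y => -Ψinv y) := (strictAnti_psiInv hΨanti hinv2).neg
  have hrange : Ioo (-1) 0 ⊆ (fun y => -Ψinv y) '' univ := fun z hz =>
    ⟨Ψ (-z), trivial, show -Ψinv (Ψ (-z)) = z by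
      rw [hinv1 (-z) ⟨by linarith [hz.2], by linarith [hz.1]⟩, neg_neg]⟩
  have hneg : Continuous (fun y => -Ψinv y) := continuous_iff_continuousAt.2 fun y =>
    (hmono.strictMonoOn univ).continuousAt_of_image_mem_nhds univ_mem <|
      mem_of_superset (Ioo_mem_nhds (by linarith [(hinv2 y).1.2]) (by linarith [(hinv2 y).1.1]))
        hrange
  exact hneg.neg.congr fun y => neg_neg _

lemma psiInv_neg (hΨsym : ∀ x ∈ Ioo (0:ℝ) 1, Ψ (1 - x) = -Ψ x)
    (hinv1 : ∀ x ∈ Ioo (0:ℝ) 1, Ψinv (Ψ x) = x)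
    (hinv2 : ∀ y : ℝ, Ψinv y ∈ Ioo (0:ℝ) 1 ∧ Ψ (Ψinv y) = y) (t : ℝ) :
    Ψinv (-t) = 1 - Ψinv t := by
  obtain ⟨⟨h0, h1⟩, hΨ⟩ := hinv2 t
  calc Ψinv (-t) = Ψinv (Ψ (1 - Ψinv t)) := by rw [hΨsym _ ⟨h0, h1⟩, hΨ]
    _ = 1 - Ψinv t := hinv1 _ ⟨by linarith, by linarith⟩

lemma one_sub_map_one_sub (hΨsym : ∀ x ∈ Ioo (0:ℝ) 1, Ψ (1 - x) = -Ψ x)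
    (hinv1 : ∀ x ∈ Ioo (0:ℝ) 1, Ψinv (Ψ x) = x)
    (hinv2 : ∀ y : ℝ, Ψinv y ∈ Ioo (0:ℝ) 1 ∧ Ψ (Ψinv y) = y) (a b : ℝ) {x : ℝ}
    (hx : x ∈ Ioo (0:ℝ) 1) : 1 - map Ψ Ψinv a b (1 - x) = map Ψ Ψinv a (1 - b) x := by
  have h : Ψ (1 - x) + a * (1 - x - b) = -(Ψ x + a * (x - (1 - b))) := by
    rw [hΨsym x hx]; ring
  rw [map, map, h, psiInv_neg hΨsym hinv1 hinv2, sub_sub_cancel]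

lemma continuousOn_map (hΨcont : ContinuousOn Ψ (Ioo 0 1)) (hΨanti : StrictAntiOn Ψ (Ioo 0 1))
    (hinv1 : ∀ x ∈ Ioo (0:ℝ) 1, Ψinv (Ψ x) = x)
    (hinv2 : ∀ y : ℝ, Ψinv y ∈ Ioo (0:ℝ) 1 ∧ Ψ (Ψinv y) = y) (a b : ℝ) :
    ContinuousOn (map Ψ Ψinv a b) (Ioo 0 1) :=
  (continuous_psiInv hΨanti hinv1 hinv2).comp_continuousOn (hΨcont.add (by fun_prop))

lemma eventually_lt_mul (C : ℝ) {k : ℝ} (hk : 0 < k) : ∀ᶠ a in atTop, C < a * k :=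
  (tendsto_id.atTop_mul_const hk).eventually_gt_atTop C

lemma eventually_le_map (hΨanti : StrictAntiOn Ψ (Ioo 0 1))
    (hinv1 : ∀ x ∈ Ioo (0:ℝ) 1, Ψinv (Ψ x) = x)
    (hinv2 : ∀ y : ℝ, Ψinv y ∈ Ioo (0:ℝ) 1 ∧ Ψ (Ψinv y) = y) {b x y : ℝ} (hxb : x < b)
    (hy : y ∈ Ioo (0:ℝ) 1) : ∀ᶠ a in atTop, y ≤ map Ψ Ψinv a b x := by
  filter_upwards [eventually_lt_mul (Ψ x - Ψ y) (sub_pos.2 hxb)] with a ha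
  rw [map, ← hinv1 y hy]
  exact (strictAnti_psiInv hΨanti hinv2).antitone (by linarith)

lemma eventually_horseshoe (hΨanti : StrictAntiOn Ψ (Ioo 0 1))
    (hinv1 : ∀ x ∈ Ioo (0:ℝ) 1, Ψinv (Ψ x) = x)
    (hinv2 : ∀ y : ℝ, Ψinv y ∈ Ioo (0:ℝ) 1 ∧ Ψ (Ψinv y) = y) {b : ℝ} (hb0 : 0 < b)
    (hb : b < 1 / 2) :
    ∀ᶠ a in atTop, ∃ l m α β, 0 < l ∧ l < m ∧ m < α ∧ α < β ∧ β < 1 ∧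
      map Ψ Ψinv a b l ≤ α ∧ β ≤ map Ψ Ψinv a b m ∧ β ≤ map Ψ Ψinv a b α ∧
      map Ψ Ψinv a b β ≤ l := by
  have hanti := strictAnti_psiInv hΨanti hinv2
  obtain ⟨δ, hδ0, hδ⟩ := exists_between (lt_min hb0 (by linarith : 0 < 1 - 2 * b))
  rw [lt_min_iff] at hδ
  have hδ2 : δ / 2 ∈ Ioo (0:ℝ) 1 := ⟨by linarith, by linarith⟩
  -- `l` is chosen so that `Ψ l + a * (l - b) = Ψ δ + a * l`, whence `map a b l ≤ δ`
  filter_upwards [eventually_le_map hΨanti hinv1 hinv2 (b := b) (x := δ / 2) (by linarith)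
      (⟨by linarith, by linarith⟩ : 1 - δ ∈ Ioo (0:ℝ) 1),
    eventually_le_map hΨanti hinv1 hinv2 (b := b) (x := δ) hδ.1
      (⟨by linarith, by linarith⟩ : 1 - δ ∈ Ioo (0:ℝ) 1),
    eventually_lt_mul (Ψ (δ / 2) - Ψ δ) hb0,
    eventually_lt_mul (Ψ δ - Ψ (1 - δ)) (by linarith : 0 < 1 - δ - 2 * b),
    eventually_gt_atTop 0] with a hm hα hl hβ ha
  set l := Ψinv (Ψ δ + a * b)
  have hΨl : Ψ l = Ψ δ + a * b := (hinv2 _).2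
  have hl0 : 0 < l := (hinv2 _).1.1
  refine ⟨l, δ / 2, δ, 1 - δ, hl0, ?_, by linarith, by linarith, by linarith, ?_, hm, hα, ?_⟩
  · calc l < Ψinv (Ψ (δ / 2)) := hanti (by linarith)
      _ = δ / 2 := hinv1 _ hδ2
  · calc map Ψ Ψinv a b l ≤ Ψinv (Ψ δ) := hanti.antitone (by nlinarith)
      _ = δ := hinv1 _ ⟨hδ0, by linarith⟩
  · exact hanti.antitone (by linarith)

theorem exists_least_period_of_lt_half (hΨcont : ContinuousOn Ψ (Ioo 0 1))
    (hΨanti : StrictAntiOn Ψ (Ioo 0 1)) (hinv1 : ∀ x ∈ Ioo (0:ℝ) 1, Ψinv (Ψ x) = x)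
    (hinv2 : ∀ y : ℝ, Ψinv y ∈ Ioo (0:ℝ) 1 ∧ Ψ (Ψinv y) = y) {b : ℝ} (hb0 : 0 < b)
    (hb : b < 1 / 2) :
    ∃ A > (0:ℝ), ∀ a > A, ∀ f : ℝ → ℝ, (∀ x ∈ Ioo (0:ℝ) 1, f x = map Ψ Ψinv a b x) →
      ∀ n : ℕ, 1 ≤ n → ∃ x ∈ Icc (0:ℝ) 1,
        f^[n] x = x ∧ ∀ m : ℕ, 1 ≤ m → m < n → f^[m] x ≠ x := by
  obtain ⟨A, hA⟩ := eventually_atTop.1 (eventually_horseshoe hΨanti hinv1 hinv2 hb0 hb)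
  refine ⟨max A 1, by positivity, fun a ha f hf n hn => ?_⟩
  obtain ⟨l, m, α, β, hl, hlm, hmα, hαβ, hβ, hfl, hfm, hfα, hfβ⟩ :=
    hA a (le_of_lt (lt_of_le_of_lt (le_max_left _ _) ha))
  have hsub : Icc l β ⊆ Ioo 0 1 := Icc_subset_Ioo hl hβ
  have hfeq : EqOn f (map Ψ Ψinv a b) (Icc l β) := fun x hx => hf x (hsub hx)
  have hcont : ContinuousOn f (Icc l β) :=
    ((continuousOn_map hΨcont hΨanti hinv1 hinv2 a b).mono hsub).congr hfeq
  obtain ⟨x, hx, hper⟩ := exists_least_period_of_horseshoe hlm.le hmα hαβ.le hcont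
    (by rwa [hfeq ⟨le_rfl, by linarith⟩]) (by rwa [hfeq ⟨by linarith, by linarith⟩])
    (by rwa [hfeq ⟨by linarith, by linarith⟩]) (by rwa [hfeq ⟨by linarith, le_rfl⟩]) hn
  exact ⟨x, Icc_subset_Icc hl.le hβ.le hx, hper⟩

theorem exists_least_period_of_half_lt (hΨcont : ContinuousOn Ψ (Ioo 0 1))
    (hΨanti : StrictAntiOn Ψ (Ioo 0 1)) (hΨsym : ∀ x ∈ Ioo (0:ℝ) 1, Ψ (1 - x) = -Ψ x)
    (hinv1 : ∀ x ∈ Ioo (0:ℝ) 1, Ψinv (Ψ x) = x)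
    (hinv2 : ∀ y : ℝ, Ψinv y ∈ Ioo (0:ℝ) 1 ∧ Ψ (Ψinv y) = y) {b : ℝ} (hb1 : b < 1)
    (hb : 1 / 2 < b) :
    ∃ A > (0:ℝ), ∀ a > A, ∀ f : ℝ → ℝ, (∀ x ∈ Ioo (0:ℝ) 1, f x = map Ψ Ψinv a b x) →
      ∀ n : ℕ, 1 ≤ n → ∃ x ∈ Icc (0:ℝ) 1,
        f^[n] x = x ∧ ∀ m : ℕ, 1 ≤ m → m < n → f^[m] x ≠ x := by
  obtain ⟨A, hA, hper⟩ := exists_least_period_of_lt_half hΨcont hΨanti hinv1 hinv2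
    (b := 1 - b) (by linarith) (by linarith)
  refine ⟨A, hA, fun a ha f hf n hn => ?_⟩
  -- conjugating by `x ↦ 1 - x` turns `map a b` into `map a (1 - b)`
  set g : ℝ → ℝ := fun x => 1 - f (1 - x)
  have hg : ∀ x ∈ Ioo (0:ℝ) 1, g x = map Ψ Ψinv a (1 - b) x := fun x hx => by
    rw [← one_sub_map_one_sub hΨsym hinv1 hinv2 a b hx,
      ← hf (1 - x) ⟨by linarith [hx.2], by linarith [hx.1]⟩]
  have hiter (k : ℕ) (y : ℝ) : f^[k] (1 - y) = 1 - g^[k] y :=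
    ((Function.Semiconj.iterate_right (fun y => by simp [g]) k) y).symm
  obtain ⟨y, hy, hyn, hymin⟩ := hper a ha g hg n hn
  refine ⟨1 - y, ⟨by linarith [hy.2], by linarith [hy.1]⟩, by rw [hiter, hyn], ?_⟩
  intro k hk hkn hfk
  rw [hiter] at hfk
  exact hymin k hk hkn (by linarith)

end FoReL

theorem stmt15_general
    (Ψ Ψinv : ℝ → ℝ)
    (hΨcont : ContinuousOn Ψ (Set.Ioo 0 1))
    (hΨanti : StrictAntiOn Ψ (Set.Ioo 0 1))
    (hΨsym : ∀ x ∈ Set.Ioo (0:ℝ) 1, Ψ (1 - x) = -Ψ x)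
    (hinv1 : ∀ x ∈ Set.Ioo (0:ℝ) 1, Ψinv (Ψ x) = x)
    (hinv2 : ∀ y : ℝ, Ψinv y ∈ Set.Ioo (0:ℝ) 1 ∧ Ψ (Ψinv y) = y)
    (b : ℝ) (hb : b ∈ Set.Ioo (0:ℝ) 1) (hbne : b ≠ 1/2) :
    ∃ A > (0:ℝ), ∀ a > A, ∀ f : ℝ → ℝ, f 0 = 0 → f 1 = 1 →
      (∀ x ∈ Set.Ioo (0:ℝ) 1, f x = Ψinv (Ψ x + a * (x - b))) →
      ∀ n : ℕ, 1 ≤ n → ∃ x ∈ Set.Icc (0:ℝ) 1,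
        f^[n] x = x ∧ ∀ m : ℕ, 1 ≤ m → m < n → f^[m] x ≠ x := by
  obtain ⟨A, hA, hper⟩ := (lt_or_gt_of_ne hbne).elim
    (FoReL.exists_least_period_of_lt_half hΨcont hΨanti hinv1 hinv2 hb.1)
    (FoReL.exists_least_period_of_half_lt hΨcont hΨanti hΨsym hinv1 hinv2 hb.2)
  exact ⟨A, hA, fun a ha f _ _ hf => hper a ha f hf⟩

theorem stmt15
    (Ψ Ψinv : ℝ → ℝ)
    (hΨcont : ContinuousOn Ψ (Set.Ioo 0 1))
    (hΨanti : StrictAntiOn Ψ (Set.Ioo 0 1))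
    (hΨbij : Set.BijOn Ψ (Set.Ioo 0 1) Set.univ)
    (hΨsym : ∀ x ∈ Set.Ioo (0:ℝ) 1, Ψ (1 - x) = -Ψ x)
    (hinv1 : ∀ x ∈ Set.Ioo (0:ℝ) 1, Ψinv (Ψ x) = x)
    (hinv2 : ∀ y : ℝ, Ψinv y ∈ Set.Ioo (0:ℝ) 1 ∧ Ψ (Ψinv y) = y)
    (b : ℝ) (hb : b ∈ Set.Ioo (0:ℝ) 1) (hbne : b ≠ 1/2) :
    ∃ A > (0:ℝ), ∀ a > A, ∀ f : ℝ → ℝ, f 0 = 0 → f 1 = 1 →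
      (∀ x ∈ Set.Ioo (0:ℝ) 1, f x = Ψinv (Ψ x + a * (x - b))) →
      ∀ n : ℕ, 1 ≤ n → ∃ x ∈ Set.Icc (0:ℝ) 1,
        f^[n] x = x ∧ ∀ m : ℕ, 1 ≤ m → m < n → f^[m] x ≠ x :=
  stmt15_general Ψ Ψinv hΨcont hΨanti hΨsym hinv1 hinv2 b hb hbne
end

section
/- Consider the symmetric case b = 1/2 and write f_a = f_{a,1/2}. If a > −2Ψ′(1/2), then there exists σ ∈ (0, 1/2) with 2Ψ(σ) = −a(σ − 1/2); equivalently f_a(σ) = 1 − σ, so that {σ, 1 − σ} is a periodic orbit of f_a of period 2. -/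
/-!
Put `g x = 2 Ψ x + a (x - 1/2)`, so that the period-two condition reads `g σ = 0`. Symmetry
gives `Ψ (1/2) = 0`, hence `g (1/2) = 0`, and `g' (1/2) = 2 Ψ' (1/2) + a > 0`, so `g` is negative
just left of `1/2`. At the point `x₀` with `Ψ x₀ = a` (which lies left of `1/2`) we have
`g x₀ = 2a + a (x₀ - 1/2) > 0`, and the intermediate value theorem yields the root `σ`.
Finally `Ψ σ + a (σ - 1/2) = -Ψ σ = Ψ (1 - σ)`, so `f σ = 1 - σ`.
-/

open Set Filter Topology SignType

lemma exists_mem_Ioo_neg_of_deriv_pos {g : ℝ → ℝ} {l c : ℝ} (hl : l < c)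
    (hderiv : 0 < deriv g c) (hc : g c = 0) : ∃ x ∈ Ioo l c, g x < 0 := by
  have hsign : ∀ᶠ x in 𝓝[<] c, sign (g x) = sign (x - c) :=
    nhdsWithin_le_nhds (eventually_nhdsWithin_sign_eq_of_deriv_pos hderiv hc)
  obtain ⟨x, hsgn, hx⟩ := (hsign.and (Ioo_mem_nhdsLT hl)).exists
  refine ⟨x, hx, ?_⟩
  rw [← sign_eq_neg_one_iff, hsgn, sign_eq_neg_one_iff, sub_neg]
  exact hx.2

section SymmetricPotential

variable {Ψ : ℝ → ℝ} (hΨsym : ∀ x ∈ Ioo (0 : ℝ) 1, Ψ (1 - x) = -Ψ x)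
include hΨsym

lemma apply_half_eq_zero_of_symm : Ψ (1 / 2) = 0 := by
  have h := hΨsym (1 / 2) (by norm_num)
  norm_num at h
  linarith

lemma lt_half_of_symm_of_pos (hΨanti : StrictAntiOn Ψ (Ioo 0 1)) {x : ℝ}
    (hx : x ∈ Ioo (0 : ℝ) 1) (hpos : 0 < Ψ x) : x < 1 / 2 := by
  by_contra! hle
  have := hΨanti.antitoneOn (by norm_num) hx hle
  linarith [apply_half_eq_zero_of_symm hΨsym]

lemma exists_root_two_mul_add_mul_sub_half (hΨcont : ContinuousOn Ψ (Ioo 0 1))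
    (hΨanti : StrictAntiOn Ψ (Ioo 0 1)) (hΨdiff : DifferentiableAt ℝ Ψ (1 / 2)) {a : ℝ}
    (ha : 0 < a) (ha2 : -2 * deriv Ψ (1 / 2) < a) {x₀ : ℝ} (hx₀ : x₀ ∈ Ioo (0 : ℝ) 1)
    (hΨx₀ : Ψ x₀ = a) : ∃ σ ∈ Ioo (0 : ℝ) (1 / 2), 2 * Ψ σ + a * (σ - 1 / 2) = 0 := by
  set g : ℝ → ℝ := fun x => 2 * Ψ x + a * (x - 1 / 2)
  have hx₀half : x₀ < 1 / 2 := lt_half_of_symm_of_pos hΨsym hΨanti hx₀ (hΨx₀ ▸ ha)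
  have hgx₀ : 0 < g x₀ := by
    simp only [g, hΨx₀]
    nlinarith [hx₀.1]
  have hg_half : g (1 / 2) = 0 := by
    simp only [g, apply_half_eq_zero_of_symm hΨsym]
    ring
  have hderiv : deriv g (1 / 2) = 2 * deriv Ψ (1 / 2) + a := by
    have h : HasDerivAt g (2 * deriv Ψ (1 / 2) + a * 1) (1 / 2) :=
      (hΨdiff.hasDerivAt.const_mul 2).add
        (((hasDerivAt_id (1 / 2 : ℝ)).sub_const (1 / 2)).const_mul a)
    rw [h.deriv, mul_one]
  obtain ⟨x₁, hx₁, hgx₁⟩ :=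
    exists_mem_Ioo_neg_of_deriv_pos hx₀half (by linarith) hg_half
  have hsub : Icc x₀ x₁ ⊆ Ioo 0 1 := fun x hx =>
    ⟨hx₀.1.trans_le hx.1, by linarith [hx.2, hx₁.2]⟩
  have hgcont : ContinuousOn g (Icc x₀ x₁) :=
    (continuousOn_const.mul (hΨcont.mono hsub)).add (by fun_prop)
  obtain ⟨σ, hσ, hgσ⟩ := intermediate_value_Ioo' hx₁.1.le hgcont ⟨hgx₁, hgx₀⟩
  exact ⟨σ, ⟨hx₀.1.trans hσ.1, hσ.2.trans hx₁.2⟩, hgσ⟩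

lemma inv_apply_add_eq_one_sub {Ψinv : ℝ → ℝ} (hinv : ∀ x ∈ Ioo (0 : ℝ) 1, Ψinv (Ψ x) = x)
    {σ t : ℝ} (hσ : σ ∈ Ioo (0 : ℝ) 1) (h : 2 * Ψ σ = -t) : Ψinv (Ψ σ + t) = 1 - σ := by
  have hreflect : Ψ σ + t = Ψ (1 - σ) := by
    rw [hΨsym σ hσ]
    linarith
  rw [hreflect, hinv _ ⟨by linarith [hσ.2], by linarith [hσ.1]⟩]

end SymmetricPotential

theorem stmt18_general
    (Ψ Ψinv : ℝ → ℝ)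
    (hΨcont : ContinuousOn Ψ (Set.Ioo 0 1))
    (hΨanti : StrictAntiOn Ψ (Set.Ioo 0 1))
    (hΨsym : ∀ x ∈ Set.Ioo (0:ℝ) 1, Ψ (1 - x) = -Ψ x)
    (hinv1 : ∀ x ∈ Set.Ioo (0:ℝ) 1, Ψinv (Ψ x) = x)
    (hinv2 : ∀ y : ℝ, Ψinv y ∈ Set.Ioo (0:ℝ) 1 ∧ Ψ (Ψinv y) = y)
    (hΨdiff : ∀ x ∈ Set.Ioo (0:ℝ) 1, DifferentiableAt ℝ Ψ x)
    (a : ℝ) (ha : 0 < a) (ha2 : -2 * deriv Ψ (1/2) < a)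
    (f : ℝ → ℝ)
    (hf : ∀ x ∈ Set.Ioo (0:ℝ) 1, f x = Ψinv (Ψ x + a * (x - 1/2))) :
    ∃ σ ∈ Set.Ioo (0:ℝ) (1/2),
      2 * Ψ σ = -(a * (σ - 1/2)) ∧ f σ = 1 - σ := by
  obtain ⟨σ, hσ, hroot⟩ := exists_root_two_mul_add_mul_sub_half hΨsym hΨcont hΨanti
    (hΨdiff _ (by norm_num)) ha ha2 (hinv2 a).1 (hinv2 a).2
  have hσ01 : σ ∈ Ioo (0 : ℝ) 1 := ⟨hσ.1, by linarith [hσ.2]⟩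
  have hperiod : 2 * Ψ σ = -(a * (σ - 1 / 2)) := by linarith
  exact ⟨σ, hσ, hperiod, (hf σ hσ01).trans (inv_apply_add_eq_one_sub hΨsym hinv1 hσ01 hperiod)⟩

theorem stmt18
    (Ψ Ψinv : ℝ → ℝ)
    (hΨcont : ContinuousOn Ψ (Set.Ioo 0 1))
    (hΨanti : StrictAntiOn Ψ (Set.Ioo 0 1))
    (hΨbij : Set.BijOn Ψ (Set.Ioo 0 1) Set.univ)
    (hΨsym : ∀ x ∈ Set.Ioo (0:ℝ) 1, Ψ (1 - x) = -Ψ x)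
    (hinv1 : ∀ x ∈ Set.Ioo (0:ℝ) 1, Ψinv (Ψ x) = x)
    (hinv2 : ∀ y : ℝ, Ψinv y ∈ Set.Ioo (0:ℝ) 1 ∧ Ψ (Ψinv y) = y)
    (hΨdiff : ∀ x ∈ Set.Ioo (0:ℝ) 1, DifferentiableAt ℝ Ψ x)
    (hΨderivCont : ContinuousOn (deriv Ψ) (Set.Ioo (0:ℝ) 1))
    (hΨderivNeg : ∀ x ∈ Set.Ioo (0:ℝ) 1, deriv Ψ x < 0)
    (a : ℝ) (ha : 0 < a) (ha2 : -2 * deriv Ψ (1/2) < a)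
    (f : ℝ → ℝ) (hf0 : f 0 = 0) (hf1 : f 1 = 1)
    (hf : ∀ x ∈ Set.Ioo (0:ℝ) 1, f x = Ψinv (Ψ x + a * (x - 1/2))) :
    ∃ σ ∈ Set.Ioo (0:ℝ) (1/2),
      2 * Ψ σ = -(a * (σ - 1/2)) ∧ f σ = 1 - σ :=
  stmt18_general Ψ Ψinv hΨcont hΨanti hΨsym hinv1 hinv2 hΨdiff a ha ha2 f hf
end
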